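/- arXiv:1311.6608 — 9 statements merged into one kernel-verified Lean document; each statement's English description precedes it below -/
import Mathlib

section
/- Let N be a group and A a finite normal subgroup of N such that the quotient N/A is infinite cyclic. Then every element g of N has a positive power g^n (for some integer n > 0) lying in the center of N. -/
/-!
Because `N ⧸ A` is abelian, every commutator of `N` lies in the finite group `A`, and `N` is
finitely generated, being an extension of the finite group `A` by a cyclic group. In a finitely
generated group with finitely many commutators the center has finite index (the cosets of the
center embed into the maps from a finite generating set to the commutator set), so `g ^ n` is
central for `n` the index of the center.
-/

open Subgroup

theorem Group.fg_of_isCyclic (G : Type*) [Group G] [IsCyclic G] : Group.FG G := by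
  obtain ⟨g, hg⟩ := isCyclic_iff_exists_zpowers_eq_top.mp ‹IsCyclic G›
  exact Group.fg_iff.mpr ⟨{g}, by rwa [← zpowers_eq_closure], Set.finite_singleton g⟩

theorem Group.fg_of_fg_of_fg_quotient {G : Type*} [Group G] (H : Subgroup G) [H.Normal]
    [Group.FG H] [Group.FG (G ⧸ H)] : Group.FG G := by
  obtain ⟨S, hS⟩ := (Group.fg_iff_subgroup_fg H).mp ‹_›
  obtain ⟨T, hT, hTfin⟩ := Group.fg_iff.mp ‹Group.FG (G ⧸ H)›
  set K := closure ((S : Set G) ∪ Quotient.out '' T)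
  have hHK : H ≤ K := hS ▸ closure_mono Set.subset_union_left
  have hKmap : K.map (QuotientGroup.mk' H) = ⊤ := by
    rw [eq_top_iff, ← hT, MonoidHom.map_closure]
    exact closure_mono fun q hq => ⟨q.out, Set.subset_union_right ⟨q, hq, rfl⟩, q.out_eq'⟩
  have hK : K = ⊤ := calc
    K = (K.map (QuotientGroup.mk' H)).comap (QuotientGroup.mk' H) :=
      (comap_map_eq_self (by rwa [QuotientGroup.ker_mk'])).symm
    _ = ⊤ := by rw [hKmap, comap_top]
  exact Group.fg_iff.mpr ⟨_, hK, S.finite_toSet.union (hTfin.image _)⟩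

theorem finite_commutatorSet_of_commutator_le {G : Type*} [Group G] (A : Subgroup G) [Finite A]
    (h : commutator G ≤ A) : Finite (commutatorSet G) :=
  Finite.Set.subset (A : Set G) fun _ hx => h (commutator_eq_closure G ▸ subset_closure hx)

theorem Subgroup.exists_pos_pow_mem {G : Type*} [Group G] (H : Subgroup G) [H.Normal]
    [H.FiniteIndex] (g : G) : ∃ n : ℕ, 0 < n ∧ g ^ n ∈ H :=
  ⟨H.index, Nat.pos_of_ne_zero FiniteIndex.index_ne_zero, H.pow_index_mem g⟩

theorem power_central_of_finite_by_infinite_cyclic_general (N : Type*) [Group N]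
    (A : Subgroup N) [A.Normal] [Finite A]
    (hcyc : IsCyclic (N ⧸ A)) :
    ∀ g : N, ∃ n : ℕ, 0 < n ∧ g ^ n ∈ Subgroup.center N := by
  have : Group.FG (N ⧸ A) := Group.fg_of_isCyclic _
  have : Group.FG N := Group.fg_of_fg_of_fg_quotient A
  have : Finite (commutatorSet N) := finite_commutatorSet_of_commutator_le A
    (Normal.quotient_commutative_iff_commutator_le.mp inferInstance)
  exact (center N).exists_pos_pow_mem

/-- If `A` is a finite normal subgroup of a group `N` such that the quotient
`N ⧸ A` is infinite cyclic, then every element of `N` has a positive power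
lying in the center of `N`. -/
theorem power_central_of_finite_by_infinite_cyclic (N : Type*) [Group N]
    (A : Subgroup N) [A.Normal] [Finite A]
    (hcyc : IsCyclic (N ⧸ A)) (hinf : Infinite (N ⧸ A)) :
    ∀ g : N, ∃ n : ℕ, 0 < n ∧ g ^ n ∈ Subgroup.center N :=
  power_central_of_finite_by_infinite_cyclic_general N A hcyc
end

section
/- Let N be a group, A a finite normal subgroup of N, and N₊ a subgroup of N of index at most 2 that contains A and is normal in N, such that N₊/A is infinite cyclic. Then for every element g of N₊ of infinite order there exists an integer n > 0 such that for all h in N, h g^n h⁻¹ equals g^n or g^{-n}. -/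
/-!
Conjugation by `h ∈ N` induces an automorphism of the infinite cyclic group `N₊ ⧸ A`, hence acts
on it as `x ↦ x` or `x ↦ x⁻¹`. Since `A` is finite, some power `x = g ^ m` centralizes `A`; then
`h x h⁻¹ = x ^ (±1) * a` with `a ∈ A` commuting with `x`, and raising to the power `|A|` kills `a`,
so `n = m * |A|` works.
-/

theorem MulAut.eq_id_or_eq_inv_of_isCyclic {Q : Type*} [Group Q] [IsCyclic Q] [Infinite Q]
    (σ : MulAut Q) : (∀ x, σ x = x) ∨ ∀ x, σ x = x⁻¹ := by
  obtain ⟨k, hk⟩ := MonoidHom.map_cyclic σ.toMonoidHom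
  obtain ⟨l, hl⟩ := MonoidHom.map_cyclic σ.symm.toMonoidHom
  obtain ⟨t, ht⟩ := IsCyclic.exists_ofOrder_eq_natCard (α := Q)
  have ht_inf : ¬IsOfFinOrder t := by
    rw [← orderOf_eq_zero_iff, ht, Nat.card_eq_zero_of_infinite]
  have hkl : k * l = 1 := injective_zpow_iff_not_isOfFinOrder.2 ht_inf <| by
    show t ^ (k * l) = t ^ (1 : ℤ)
    rw [zpow_one, zpow_mul, ← hk, ← hl]
    exact σ.symm_apply_apply t
  rcases Int.eq_one_or_neg_one_of_mul_eq_one hkl with rfl | rfl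
  · exact .inl fun x => by simpa using hk x
  · exact .inr fun x => by simpa using hk x

namespace Subgroup

variable {N : Type*} [Group N]

def conjQuotient (A P : Subgroup N) [A.Normal] [P.Normal] (h : N) :
    MulAut (P ⧸ A.subgroupOf P) :=
  QuotientGroup.congr _ _ (MulAut.conjNormal h) <| by
    ext x
    rw [map_equiv_eq_comap_symm, mem_comap, mem_subgroupOf, mem_subgroupOf, MonoidHom.coe_coe,
      MulAut.conjNormal_symm_apply, mul_assoc, ‹A.Normal›.mem_comm_iff, mul_inv_cancel_right]

theorem conjQuotient_mk (A P : Subgroup N) [A.Normal] [P.Normal] (h : N) (x : P) :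
    conjQuotient A P h x = ((MulAut.conjNormal h x : P) : P ⧸ A.subgroupOf P) :=
  QuotientGroup.congr_mk _ _ _ _ x

theorem inv_mul_conj_mem_or_mul_conj_mem (A P : Subgroup N) [A.Normal] [P.Normal]
    [IsCyclic (P ⧸ A.subgroupOf P)] [Infinite (P ⧸ A.subgroupOf P)] (h : N) {x : N}
    (hx : x ∈ P) : x⁻¹ * (h * x * h⁻¹) ∈ A ∨ x * (h * x * h⁻¹) ∈ A := by
  have hconj := conjQuotient_mk A P h ⟨x, hx⟩
  rcases (conjQuotient A P h).eq_id_or_eq_inv_of_isCyclic with hσ | hσ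
  · left
    rw [hσ, QuotientGroup.eq, mem_subgroupOf] at hconj
    simpa [MulAut.conjNormal_apply] using hconj
  · right
    rw [hσ, ← QuotientGroup.mk_inv, QuotientGroup.eq, mem_subgroupOf] at hconj
    simpa [MulAut.conjNormal_apply] using hconj

theorem exists_pow_mem_centralizer_of_finite (A : Subgroup N) [A.Normal] [Finite A] (g : N) :
    ∃ m, 0 < m ∧ g ^ m ∈ centralizer (A : Set N) := by
  obtain ⟨m, hm, hgm⟩ :=
    (isOfFinOrder_of_finite (MulAut.conjNormal g : MulAut A)).exists_pow_eq_one
  refine ⟨m, hm, mem_centralizer_iff.2 fun a ha => ?_⟩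
  have hfix := congrArg Subtype.val (DFunLike.congr_fun hgm ⟨a, ha⟩)
  rw [← map_pow, MulAut.one_apply, MulAut.conjNormal_apply] at hfix
  exact (eq_mul_of_mul_inv_eq hfix).symm

theorem pow_card_eq_of_inv_mul_mem (A : Subgroup N) [Finite A] {x y : N}
    (hx : x ∈ centralizer (A : Set N)) (hxy : x⁻¹ * y ∈ A) :
    y ^ Nat.card A = x ^ Nat.card A := by
  obtain ⟨a, ha, rfl⟩ : ∃ a ∈ A, x * a = y := ⟨_, hxy, mul_inv_cancel_left x y⟩
  have ha_pow : a ^ Nat.card A = 1 := congrArg Subtype.val (pow_card_eq_one' (x := (⟨a, ha⟩ : A)))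
  have hxa : Commute x a := (mem_centralizer_iff.1 hx a ha).symm
  rw [hxa.mul_pow, ha_pow, mul_one]

end Subgroup

theorem tight_power_of_axis_stabilizer_general (N : Type*) [Group N]
    (A Nplus : Subgroup N) [A.Normal] [Nplus.Normal] [Finite A]
    [(A.subgroupOf Nplus).Normal]
    (hcyc : IsCyclic (Nplus ⧸ A.subgroupOf Nplus))
    (hinf : Infinite (Nplus ⧸ A.subgroupOf Nplus)) :
    ∀ g : N, g ∈ Nplus → ¬ IsOfFinOrder g →
      ∃ n : ℕ, 0 < n ∧ ∀ h : N, h * g ^ n * h⁻¹ = g ^ n ∨ h * g ^ n * h⁻¹ = (g ^ n)⁻¹ := by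
  intro g hg _
  obtain ⟨m, hm, hgm⟩ := A.exists_pow_mem_centralizer_of_finite g
  refine ⟨m * Nat.card A, Nat.mul_pos hm Nat.card_pos, fun h => ?_⟩
  rw [pow_mul, ← conj_pow, ← inv_pow]
  rcases A.inv_mul_conj_mem_or_mul_conj_mem Nplus h (Nplus.pow_mem hg m) with hA | hA
  · exact .inl (A.pow_card_eq_of_inv_mul_mem hgm hA)
  · exact .inr (A.pow_card_eq_of_inv_mul_mem (inv_mem hgm) (by rwa [inv_inv]))

/-- Let `N` be a group, `A` a finite normal subgroup of `N`, and `N₊` a normal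
subgroup of `N` of index at most `2` containing `A`, such that `N₊ ⧸ A` is
infinite cyclic.  Then for every element `g` of `N₊` of infinite order there is
an integer `n > 0` such that every conjugate of `g ^ n` in `N` equals `g ^ n`
or `g ^ (-n)`. -/
theorem tight_power_of_axis_stabilizer (N : Type*) [Group N]
    (A Nplus : Subgroup N) [A.Normal] [Nplus.Normal] [Finite A]
    (hle : A ≤ Nplus) (hindex : Nplus.index ≤ 2)
    [(A.subgroupOf Nplus).Normal]
    (hcyc : IsCyclic (Nplus ⧸ A.subgroupOf Nplus))
    (hinf : Infinite (Nplus ⧸ A.subgroupOf Nplus)) :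
    ∀ g : N, g ∈ Nplus → ¬ IsOfFinOrder g →
      ∃ n : ℕ, 0 < n ∧ ∀ h : N, h * g ^ n * h⁻¹ = g ^ n ∨ h * g ^ n * h⁻¹ = (g ^ n)⁻¹ :=
  tight_power_of_axis_stabilizer_general N A Nplus hcyc hinf
end

section
/- For every integer p ≥ 4 there is a unique real number m_p in the open interval (1,2) satisfying m_p^p (2 − m_p) = 2 m_p − 1. Moreover 2 − 4 m_p^{−p} < m_p < 2, the sequence (m_p) is strictly increasing in p, and m_p tends to 2 as p tends to infinity. -/
/-!
Put `G(x) = x^p (2 - x) / (2x - 1)`, so that the equation reads `G(m) = 1`, with `G(1) = 1` and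
`G(2) = 0`. Its derivative is `x^(p-1) q(x) / (2x - 1)^2` for the concave quadratic
`q(x) = -2p x^2 + (5p - 3) x - 2p`, whose roots are `s` and `1/s`; as `q(1) = p - 3 > 0 > q(2)`,
`1 < s < 2`. Hence `G` increases on `[1, s]` and decreases on `[s, 2]`: it takes the value `1`
exactly once in `(1, 2)`, at `m_p`, and `G(x) > 1` on `(1, 2]` exactly when `x < m_p`.
Monotonicity in `p` follows because `m_p^(p+1) (2 - m_p) > 2 m_p - 1`, the lower bound from
`2 - m_p = (2 m_p - 1) m_p^(-p)`, and the limit from `m_p > 3/2`.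
-/

open Set Filter Topology

theorem lt_iff_lt_of_strictMonoOn_of_strictAntiOn {α β : Type*} [LinearOrder α] [Preorder β]
    {f : α → β} {a s b x y : α}
    (hmono : StrictMonoOn f (Icc a s)) (hanti : StrictAntiOn f (Icc s b))
    (hx : x ∈ Ioc a b) (hy : y ∈ Ioc a b) (hfy : f y = f a) :
    f a < f x ↔ x < y := by
  have hsy : s < y := by
    by_contra! hys
    exact (hmono ⟨le_rfl, hy.1.le.trans hys⟩ ⟨hy.1.le, hys⟩ hy.1).ne' hfy
  constructor
  · intro hfx
    by_contra! hyx
    exact (hanti.antitoneOn ⟨hsy.le, hy.2⟩ ⟨hsy.le.trans hyx, hx.2⟩ hyx).not_gt (hfy ▸ hfx)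
  · intro hxy
    rcases le_or_gt x s with hxs | hsx
    · exact hmono ⟨le_rfl, hx.1.le.trans hxs⟩ ⟨hx.1.le, hxs⟩ hx.1
    · exact hfy ▸ hanti ⟨hsx.le, hx.2⟩ ⟨hsy.le, hy.2⟩ hxy

noncomputable def mpRatio (p : ℕ) (x : ℝ) : ℝ := x ^ p * (2 - x) / (2 * x - 1)

def mpQuad (p : ℕ) (x : ℝ) : ℝ := -2 * p * x ^ 2 + (5 * p - 3) * x - 2 * p

theorem hasDerivAt_mpRatio {p : ℕ} (hp : 1 ≤ p) {x : ℝ} (hx : 2 * x - 1 ≠ 0) :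
    HasDerivAt (mpRatio p) (x ^ (p - 1) * mpQuad p x / (2 * x - 1) ^ 2) x := by
  have hnum : HasDerivAt (fun y : ℝ => y ^ p * (2 - y))
      (p * x ^ (p - 1) * (2 - x) + x ^ p * (-1)) x :=
    (hasDerivAt_pow p x).mul ((hasDerivAt_id x).const_sub 2)
  have hden : HasDerivAt (fun y : ℝ => 2 * y - 1) 2 x := by
    simpa using ((hasDerivAt_id x).const_mul 2).sub_const 1
  refine (hnum.div hden hx).congr_deriv ?_
  rw [← pow_sub_one_mul (by omega : p ≠ 0) x, mpQuad]
  ring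

/-- The roots of `mpQuad p` are `s` and `1 / s`. -/
theorem mul_mpQuad_of_mpQuad_eq_zero {p : ℕ} {s : ℝ} (hs : mpQuad p s = 0) (x : ℝ) :
    s * mpQuad p x = 2 * p * (s - x) * (s * x - 1) := by
  unfold mpQuad at *
  linear_combination x * hs

theorem exists_mpQuad_eq_zero {p : ℕ} (hp : 4 ≤ p) : ∃ s ∈ Ioo (1 : ℝ) 2, mpQuad p s = 0 := by
  have hp' : (4 : ℝ) ≤ p := by exact_mod_cast hp
  have hcont : ContinuousOn (mpQuad p) (Icc 1 2) := by unfold mpQuad; fun_prop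
  exact intermediate_value_Ioo' (by norm_num) hcont
    ⟨by norm_num [mpQuad]; linarith, by norm_num [mpQuad]; linarith⟩

theorem exists_strictMonoOn_strictAntiOn_mpRatio {p : ℕ} (hp : 4 ≤ p) :
    ∃ s ∈ Ioo (1 : ℝ) 2, StrictMonoOn (mpRatio p) (Icc 1 s) ∧
      StrictAntiOn (mpRatio p) (Icc s 2) := by
  obtain ⟨s, hs, hqs⟩ := exists_mpQuad_eq_zero hp
  have hderiv : ∀ x, 1 ≤ x →
      HasDerivAt (mpRatio p) (x ^ (p - 1) * mpQuad p x / (2 * x - 1) ^ 2) x :=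
    fun x hx => hasDerivAt_mpRatio (by omega) (by linarith)
  have hcont : ∀ t u, 1 ≤ t → ContinuousOn (mpRatio p) (Icc t u) := fun t u ht x hx =>
    (hderiv x (ht.trans hx.1)).continuousAt.continuousWithinAt
  have hderiv_eq : ∀ x, 1 ≤ x → deriv (mpRatio p) x =
      x ^ (p - 1) / (s * (2 * x - 1) ^ 2) * (2 * p * (s - x) * (s * x - 1)) := by
    intro x hx
    have : 2 * x - 1 ≠ 0 := by linarith
    have : s ≠ 0 := by linarith [hs.1]
    rw [(hderiv x hx).deriv, ← mul_mpQuad_of_mpQuad_eq_zero hqs]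
    field_simp
  have hscale : ∀ x, 1 ≤ x → 0 < x ^ (p - 1) / (s * (2 * x - 1) ^ 2) := fun x hx => by
    have : 0 < s * (2 * x - 1) ^ 2 := by nlinarith [hs.1]
    positivity
  refine ⟨s, hs, strictMonoOn_of_deriv_pos (convex_Icc _ _) (hcont _ _ le_rfl) ?_,
    strictAntiOn_of_deriv_neg (convex_Icc _ _) (hcont _ _ hs.1.le) ?_⟩
  · intro x hx
    obtain ⟨hx1, hxs⟩ : x ∈ Ioo 1 s := by rwa [interior_Icc] at hx
    rw [hderiv_eq x hx1.le]
    have : 0 < s * x - 1 := by nlinarith [hs.1]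
    have : 0 < s - x := by linarith
    exact mul_pos (hscale x hx1.le) (by positivity)
  · intro x hx
    obtain ⟨hsx, hx2⟩ : x ∈ Ioo s 2 := by rwa [interior_Icc] at hx
    have hx1 : 1 < x := hs.1.trans hsx
    rw [hderiv_eq x hx1.le]
    have : 0 < s * x - 1 := by nlinarith [hs.1]
    refine mul_neg_of_pos_of_neg (hscale x hx1.le) (mul_neg_of_neg_of_pos ?_ this)
    exact mul_neg_of_pos_of_neg (by positivity) (by linarith)

theorem mpRatio_one (p : ℕ) : mpRatio p 1 = 1 := by norm_num [mpRatio]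

theorem one_lt_mpRatio_iff {p : ℕ} (hp : 4 ≤ p) {x y : ℝ} (hx : x ∈ Ioc 1 2) (hy : y ∈ Ioc 1 2)
    (hy1 : mpRatio p y = 1) : 1 < mpRatio p x ↔ x < y := by
  obtain ⟨s, -, hmono, hanti⟩ := exists_strictMonoOn_strictAntiOn_mpRatio hp
  rw [← mpRatio_one p] at hy1 ⊢
  exact lt_iff_lt_of_strictMonoOn_of_strictAntiOn hmono hanti hx hy hy1

theorem exists_mpRatio_eq_one {p : ℕ} (hp : 4 ≤ p) : ∃ m ∈ Ioo (1 : ℝ) 2, mpRatio p m = 1 := by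
  obtain ⟨s, hs, hmono, hanti⟩ := exists_strictMonoOn_strictAntiOn_mpRatio hp
  have hs1 : 1 < mpRatio p s := by
    simpa only [mpRatio_one] using hmono ⟨le_rfl, hs.1.le⟩ ⟨hs.1.le, le_rfl⟩ hs.1
  have hcont : ContinuousOn (mpRatio p) (Icc s 2) := by
    refine ContinuousOn.div (by fun_prop) (by fun_prop) fun x hx => ?_
    linarith [hs.1, hx.1]
  obtain ⟨m, hm, hm1⟩ := intermediate_value_Ioo' hs.2.le hcont
    ⟨by norm_num [mpRatio], hs1⟩
  exact ⟨m, ⟨hs.1.trans hm.1, hm.2⟩, hm1⟩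

theorem mpRatio_eq_one_iff {p : ℕ} {x : ℝ} (hx : 1 < x) :
    mpRatio p x = 1 ↔ x ^ p * (2 - x) = 2 * x - 1 :=
  div_eq_one_iff_eq (by linarith)

theorem one_lt_mpRatio_iff_lt {p : ℕ} {x : ℝ} (hx : 1 < x) :
    1 < mpRatio p x ↔ 2 * x - 1 < x ^ p * (2 - x) :=
  one_lt_div (by linarith)

theorem lt_of_sub_lt_pow_mul {p : ℕ} (hp : 4 ≤ p) {x y : ℝ} (hx : x ∈ Ioo 1 2)
    (hy : y ∈ Ioo 1 2) (hy_eq : y ^ p * (2 - y) = 2 * y - 1)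
    (hx_lt : 2 * x - 1 < x ^ p * (2 - x)) : x < y :=
  (one_lt_mpRatio_iff hp (Ioo_subset_Ioc_self hx) (Ioo_subset_Ioc_self hy)
    ((mpRatio_eq_one_iff hy.1).2 hy_eq)).1 ((one_lt_mpRatio_iff_lt hx.1).2 hx_lt)

theorem existsUnique_pow_mul_eq {p : ℕ} (hp : 4 ≤ p) :
    ∃! m : ℝ, m ∈ Ioo 1 2 ∧ m ^ p * (2 - m) = 2 * m - 1 := by
  obtain ⟨m, hm, hm1⟩ := exists_mpRatio_eq_one hp
  refine ⟨m, ⟨hm, (mpRatio_eq_one_iff hm.1).1 hm1⟩, fun y ⟨hy, hy_eq⟩ => ?_⟩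
  have hy1 := (mpRatio_eq_one_iff hy.1).2 hy_eq
  have hm' := Ioo_subset_Ioc_self hm
  have hy' := Ioo_subset_Ioc_self hy
  refine le_antisymm (not_lt.1 fun hmy => ?_) (not_lt.1 fun hym => ?_)
  · exact ((one_lt_mpRatio_iff hp hm' hy' hy1).2 hmy).ne' hm1
  · exact ((one_lt_mpRatio_iff hp hy' hm' hm1).2 hym).ne' hy1

theorem two_sub_lt_of_pow_mul_eq {p : ℕ} {m : ℝ} (hm : m ∈ Ioo 1 2)
    (h : m ^ p * (2 - m) = 2 * m - 1) : 2 - 4 * m⁻¹ ^ p < m := by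
  have hm0 : 0 < m := by linarith [hm.1]
  calc 2 - 4 * m⁻¹ ^ p < 2 - (2 * m - 1) * m⁻¹ ^ p := by
        gcongr
        linarith [hm.2]
    _ = m := by
        rw [inv_pow, ← h]
        field_simp
        ring

theorem three_halves_lt_of_pow_mul_eq {p : ℕ} (hp : 4 ≤ p) {m : ℝ} (hm : m ∈ Ioo 1 2)
    (h : m ^ p * (2 - m) = 2 * m - 1) : 3 / 2 < m := by
  refine lt_of_sub_lt_pow_mul hp (by norm_num) hm h ?_
  have : (3 / 2 : ℝ) ^ 4 ≤ (3 / 2) ^ p := pow_le_pow_right₀ (by norm_num) hp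
  linarith

theorem lt_of_pow_mul_eq_of_pow_succ_mul_eq {p : ℕ} (hp : 4 ≤ p) {x y : ℝ} (hx : x ∈ Ioo 1 2)
    (hy : y ∈ Ioo 1 2) (hx_eq : x ^ p * (2 - x) = 2 * x - 1)
    (hy_eq : y ^ (p + 1) * (2 - y) = 2 * y - 1) : x < y := by
  refine lt_of_sub_lt_pow_mul (by omega) hx hy hy_eq ?_
  rw [pow_succ, mul_right_comm, hx_eq]
  nlinarith [hx.1]

theorem tendsto_two_of_two_sub_lt {m : ℕ → ℝ} {N : ℕ} (hlow : ∀ p, N ≤ p → 3 / 2 < m p)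
    (hbound : ∀ p, N ≤ p → 2 - 4 * (m p)⁻¹ ^ p < m p ∧ m p < 2) :
    Tendsto m atTop (𝓝 2) := by
  have hlim : Tendsto (fun p : ℕ => 2 - 4 * (2 / 3 : ℝ) ^ p) atTop (𝓝 2) := by
    simpa using ((tendsto_pow_atTop_nhds_zero_of_lt_one (by norm_num) (by norm_num :
      (2 / 3 : ℝ) < 1)).const_mul 4).const_sub 2
  refine tendsto_of_tendsto_of_tendsto_of_le_of_le' hlim tendsto_const_nhds ?_ ?_
  · filter_upwards [eventually_ge_atTop N] with p hp
    have hinv : (m p)⁻¹ ≤ 2 / 3 := by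
      rw [inv_le_comm₀ (by linarith [hlow p hp]) (by norm_num)]
      linarith [hlow p hp]
    have : (m p)⁻¹ ^ p ≤ (2 / 3) ^ p :=
      pow_le_pow_left₀ (inv_nonneg.2 (by linarith [hlow p hp])) hinv p
    linarith [(hbound p hp).1]
  · filter_upwards [eventually_ge_atTop N] with p hp
    exact (hbound p hp).2.le

/-- For every integer `p ≥ 4` there is a unique `m_p ∈ (1,2)` with
`m_p ^ p * (2 - m_p) = 2 * m_p - 1`; moreover `2 - 4 * m_p ^ (-p) < m_p < 2`,
the sequence `(m_p)` is strictly increasing, and `m_p → 2` as `p → ∞`. -/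
theorem mp_exists_unique_and_tends_to_two :
    (∀ p : ℕ, 4 ≤ p →
      ∃! m : ℝ, m ∈ Set.Ioo (1 : ℝ) 2 ∧ m ^ p * (2 - m) = 2 * m - 1) ∧
    ∀ m : ℕ → ℝ,
      (∀ p : ℕ, 4 ≤ p → m p ∈ Set.Ioo (1 : ℝ) 2 ∧ (m p) ^ p * (2 - m p) = 2 * m p - 1) →
      (∀ p : ℕ, 4 ≤ p → 2 - 4 * (m p)⁻¹ ^ p < m p ∧ m p < 2) ∧
      (∀ p : ℕ, 4 ≤ p → m p < m (p + 1)) ∧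
      Filter.Tendsto m Filter.atTop (nhds 2) := by
  refine ⟨fun p hp => existsUnique_pow_mul_eq hp, fun m hm => ?_⟩
  have hbound : ∀ p, 4 ≤ p → 2 - 4 * (m p)⁻¹ ^ p < m p ∧ m p < 2 := fun p hp =>
    ⟨two_sub_lt_of_pow_mul_eq (hm p hp).1 (hm p hp).2, (hm p hp).1.2⟩
  refine ⟨hbound, fun p hp => ?_, ?_⟩
  · obtain ⟨hmp, hmp_eq⟩ := hm p hp
    obtain ⟨hmq, hmq_eq⟩ := hm (p + 1) (by omega)
    exact lt_of_pow_mul_eq_of_pow_succ_mul_eq hp hmp hmq hmp_eq hmq_eq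
  · exact tendsto_two_of_two_sub_lt
      (fun p hp => three_halves_lt_of_pow_mul_eq hp (hm p hp).1 (hm p hp).2) hbound
end

section
/- Let ε be a real number with 0 < ε < 1 and let p be an integer with p ≥ 4 and p ≥ log(3/ε)/log(2−ε). Then the unique real number m in (1,2) satisfying m^p (2 − m) = 2m − 1 satisfies log 2 − ε < log m < log 2. -/
/-!
The function `φ = logDefect p`, `φ(x) = p log x + log (2 - x) - log (2x - 1)`, vanishes
in `(1/2, 2)` exactly at the solutions of `x ^ p (2 - x) = 2x - 1`. On `(1, 2)` the derivative `φ'` has the sign of the concave quadratic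
`-2p x² + (5p - 3) x - 2p`, which is positive at `1` since `p > 3`; so `φ` increases and then
decreases, and as `φ 1 = 0`, `φ(t) > 0` forces `φ > 0` on all of `(1, t]`.
The hypothesis on `p` gives `(2 - ε) ^ p ε ≥ 3 > 2 (2 - ε) - 1`, that is `φ (2 - ε) > 0`;
hence `m > 2 - ε`, and `log 2 - log (2 - ε) ≤ ε / (2 - ε) < ε`.
-/

open Real Set

noncomputable def logDefect (p x : ℝ) : ℝ := p * log x + log (2 - x) - log (2 * x - 1)

def logDefectDerivNum (p x : ℝ) : ℝ := -2 * p * x ^ 2 + (5 * p - 3) * x - 2 * p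

theorem logDefect_one (p : ℝ) : logDefect p 1 = 0 := by
  norm_num [logDefect]

theorem logDefect_eq_zero_of_pow_mul_eq {p : ℕ} {x : ℝ} (hx : 1 / 2 < x) (hx' : x < 2)
    (h : x ^ p * (2 - x) = 2 * x - 1) : logDefect p x = 0 := by
  have hlog := congrArg log h
  rw [log_mul (by positivity) (by linarith), log_pow] at hlog
  rw [logDefect, hlog, sub_self]

theorem hasDerivAt_logDefect (p : ℝ) {x : ℝ} (hx : 1 / 2 < x) (hx' : x < 2) :
    HasDerivAt (logDefect p) (logDefectDerivNum p x / (x * (2 * x - 1) * (2 - x))) x := by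
  have h0 : x ≠ 0 := by linarith
  have h1 : 2 * x - 1 ≠ 0 := by linarith
  have h2 : 2 - x ≠ 0 := by linarith
  have h : HasDerivAt (fun y => p * log y + log (2 - y) - log (2 * y - 1))
      (p / x + -1 / (2 - x) - 2 / (2 * x - 1)) x :=
    (((hasDerivAt_log h0).const_mul p).congr_deriv (div_eq_mul_inv p x).symm |>.add
      (((hasDerivAt_const x 2).sub (hasDerivAt_id x)).log h2 |>.congr_deriv (by simp))).sub
      ((((hasDerivAt_id x).const_mul 2).sub_const 1).log h1 |>.congr_deriv (by simp))
  refine h.congr_deriv ?_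
  rw [div_add_div _ _ h0 h2, div_sub_div _ _ (mul_ne_zero h0 h2) h1,
    div_eq_div_iff (by positivity) (by positivity), logDefectDerivNum]
  ring

theorem logDefectDerivNum_pos_of_nonneg {p x y : ℝ} (hp : 3 < p) (hx : 1 < x) (hxy : x < y)
    (hy : 0 ≤ logDefectDerivNum p y) : 0 < logDefectDerivNum p x := by
  -- concavity: the quadratic lies above its chord between `1` and `y`
  have hchord : (y - 1) * logDefectDerivNum p x = (y - x) * (p - 3) +
      (x - 1) * logDefectDerivNum p y + 2 * p * (x - 1) * (y - x) * (y - 1) := by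
    simp only [logDefectDerivNum]; ring
  have hpos : 0 < (y - 1) * logDefectDerivNum p x := by
    rw [hchord]
    have : 0 < p - 3 := by linarith
    have : 0 < x - 1 := by linarith
    have : 0 < y - x := by linarith
    have : 0 < y - 1 := by linarith
    positivity
  exact pos_of_mul_pos_right hpos (by linarith)

theorem continuousOn_logDefect (p : ℝ) {a b : ℝ} (ha : 1 / 2 < a) (hb : b < 2) :
    ContinuousOn (logDefect p) (Icc a b) := fun _ hx =>
  (hasDerivAt_logDefect p (ha.trans_le hx.1) (hx.2.trans_lt hb)).continuousAt.continuousWithinAt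

theorem hasDerivWithinAt_logDefect (p : ℝ) {a b x : ℝ} (ha : 1 / 2 < a) (hb : b < 2)
    (hx : x ∈ interior (Icc a b)) :
    HasDerivWithinAt (logDefect p) (logDefectDerivNum p x / (x * (2 * x - 1) * (2 - x)))
      (interior (Icc a b)) x := by
  rw [interior_Icc] at hx
  exact (hasDerivAt_logDefect p (ha.trans hx.1) (hx.2.trans hb)).hasDerivWithinAt

theorem strictMonoOn_logDefect {p x : ℝ} (hp : 3 < p) (hx : 1 < x) (hx' : x < 2)
    (hN : 0 ≤ logDefectDerivNum p x) : StrictMonoOn (logDefect p) (Icc 1 x) := by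
  refine strictMonoOn_of_hasDerivWithinAt_pos (convex_Icc 1 x)
    (continuousOn_logDefect p (by norm_num) hx')
    (fun y hy => hasDerivWithinAt_logDefect p (by norm_num) hx' hy) fun y hy => ?_
  rw [interior_Icc] at hy
  have : 0 < y := by linarith [hy.1]
  have : 0 < 2 * y - 1 := by linarith [hy.1]
  have : 0 < 2 - y := by linarith [hy.2]
  exact div_pos (logDefectDerivNum_pos_of_nonneg hp hy.1 hy.2 hN) (by positivity)

theorem strictAntiOn_logDefect {p x t : ℝ} (hp : 3 < p) (hx : 1 < x) (ht : t < 2)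
    (hN : logDefectDerivNum p x < 0) : StrictAntiOn (logDefect p) (Icc x t) := by
  refine strictAntiOn_of_hasDerivWithinAt_neg (convex_Icc x t)
    (continuousOn_logDefect p (by linarith) ht)
    (fun y hy => hasDerivWithinAt_logDefect p (by linarith) ht hy) fun y hy => ?_
  rw [interior_Icc] at hy
  have : 0 < y := by linarith [hy.1]
  have : 0 < 2 * y - 1 := by linarith [hy.1]
  have : 0 < 2 - y := by linarith [hy.2]
  refine div_neg_of_neg_of_pos (not_le.1 fun hy' => ?_) (by positivity)
  exact hN.not_gt (logDefectDerivNum_pos_of_nonneg hp hx hy.1 hy')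

theorem logDefect_pos_of_le {p x t : ℝ} (hp : 3 < p) (hx : 1 < x) (hxt : x ≤ t) (ht : t < 2)
    (hpos : 0 < logDefect p t) : 0 < logDefect p x := by
  rcases le_or_gt 0 (logDefectDerivNum p x) with hN | hN
  · have := strictMonoOn_logDefect hp hx (hxt.trans_lt ht) hN
      (left_mem_Icc.2 hx.le) (right_mem_Icc.2 hx.le) hx
    rwa [logDefect_one] at this
  · exact hpos.trans_le <| (strictAntiOn_logDefect hp hx ht hN).antitoneOn
      (left_mem_Icc.2 hxt) (right_mem_Icc.2 hxt) hxt

theorem logDefect_two_sub_pos {p ε : ℝ} (hε0 : 0 < ε) (hε1 : ε < 1)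
    (hp : log (3 / ε) / log (2 - ε) ≤ p) : 0 < logDefect p (2 - ε) := by
  have hlog : log (3 / ε) ≤ p * log (2 - ε) :=
    (div_le_iff₀ (log_pos (by linarith))).1 hp
  have hlt : log (2 * (2 - ε) - 1) < log 3 := log_lt_log (by linarith) (by linarith)
  rw [log_div (by norm_num) hε0.ne'] at hlog
  rw [logDefect, sub_sub_cancel]
  linarith

theorem sub_lt_log_sub {a ε : ℝ} (hε : 0 < ε) (h : 1 < a - ε) : log a - ε < log (a - ε) := by
  have hle : log (a / (a - ε)) ≤ a / (a - ε) - 1 := log_le_sub_one_of_pos (div_pos (by linarith) (by linarith))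
  have hfrac : a / (a - ε) - 1 < ε := by
    rw [div_sub_one (by linarith), div_lt_iff₀ (by linarith)]
    nlinarith
  rw [log_div (by linarith) (by linarith)] at hle
  linarith

/-- If `0 < ε < 1` and `p ≥ 4` is an integer with `p ≥ log(3/ε)/log(2-ε)`, then
the unique `m ∈ (1,2)` with `m ^ p * (2 - m) = 2m - 1` satisfies
`log 2 - ε < log m < log 2`. -/
theorem log_mp_close_to_log_two (ε : ℝ) (hε0 : 0 < ε) (hε1 : ε < 1)
    (p : ℕ) (hp4 : 4 ≤ p) (hp : Real.log (3 / ε) / Real.log (2 - ε) ≤ (p : ℝ))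
    (m : ℝ) (hm : m ∈ Set.Ioo (1 : ℝ) 2) (heq : m ^ p * (2 - m) = 2 * m - 1) :
    Real.log 2 - ε < Real.log m ∧ Real.log m < Real.log 2 := by
  obtain ⟨hm1, hm2⟩ := hm
  have hp3 : (3 : ℝ) < p := by exact_mod_cast hp4
  have hroot : logDefect p m = 0 := logDefect_eq_zero_of_pow_mul_eq (by linarith) hm2 heq
  have hgap : 2 - ε < m := by
    by_contra! h
    exact (logDefect_pos_of_le hp3 hm1 h (by linarith)
      (logDefect_two_sub_pos hε0 hε1 hp)).ne' hroot
  exact ⟨(sub_lt_log_sub hε0 (by linarith)).trans (log_lt_log (by linarith) hgap),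
    log_lt_log (by linarith) hm2⟩
end

section
/- For all integers p, q, r ≥ 2, μ(p,q,r) is strictly increasing in each argument; in particular μ(p,q,r) < μ(p,q,r+1). -/
/-- The vertex set of the tree `T_{p,q,r}`: a central vertex (`none`) together
with three arms of `p-1`, `q-1` and `r-1` vertices. -/
abbrev TVertex (p q r : ℕ) : Type := Option (Fin (p - 1) ⊕ (Fin (q - 1) ⊕ Fin (r - 1)))

/-- Entry recording an edge between positions `i` and `j` of a path. -/
def pathEntry (i j : ℕ) : ℝ := if i + 1 = j ∨ j + 1 = i then 1 else 0

/-- Entry recording the edge from the central vertex to position `i` of an arm. -/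
def tipEntry (i : ℕ) : ℝ := if i = 0 then 1 else 0

/-- The adjacency matrix of the tree `T_{p,q,r}`: a central vertex joined to one
end of each of three paths with `p-1`, `q-1`, and `r-1` vertices respectively. -/
def adjT (p q r : ℕ) : Matrix (TVertex p q r) (TVertex p q r) ℝ :=
  fun v w =>
    match v, w with
    | none, none => 0
    | none, some (Sum.inl i) => tipEntry i
    | none, some (Sum.inr (Sum.inl i)) => tipEntry i
    | none, some (Sum.inr (Sum.inr i)) => tipEntry i
    | some (Sum.inl i), none => tipEntry i
    | some (Sum.inr (Sum.inl i)), none => tipEntry i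
    | some (Sum.inr (Sum.inr i)), none => tipEntry i
    | some (Sum.inl i), some (Sum.inl j) => pathEntry i j
    | some (Sum.inr (Sum.inl i)), some (Sum.inr (Sum.inl j)) => pathEntry i j
    | some (Sum.inr (Sum.inr i)), some (Sum.inr (Sum.inr j)) => pathEntry i j
    | _, _ => 0

/-- `μ(p,q,r)`, the largest eigenvalue of the adjacency matrix of `T_{p,q,r}`. -/
noncomputable def muT (p q r : ℕ) : ℝ :=
  sSup {μ : ℝ | ∃ x : TVertex p q r → ℝ, x ≠ 0 ∧ (adjT p q r).mulVec x = μ • x}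

/-!
The top eigenvalue of a connected nonnegative symmetric matrix has a positive eigenvector
(Perron–Frobenius, via the Rayleigh quotient). Extended by zero to `T_{p,q,r+1}`, this eigenvector
of `T_{p,q,r}` keeps its Rayleigh quotient, so `μ(p,q,r) ≤ μ(p,q,r+1)`; equality would make the
extension an eigenvector of `T_{p,q,r+1}`, which is impossible since it vanishes at the new leaf
while the neighbour of that leaf carries a positive entry. The other two arguments follow by
permuting the arms.
-/

open Matrix WithLp Relation

namespace Matrix

variable {m n : Type*} [Fintype m] [Fintype n]

noncomputable def maxEigenvalue (A : Matrix n n ℝ) : ℝ :=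
  sSup {μ : ℝ | ∃ x : n → ℝ, x ≠ 0 ∧ A *ᵥ x = μ • x}

theorem exists_eigenvector_forall_dotProduct_mulVec_le [Nonempty n]
    {A : Matrix n n ℝ} (hA : A.IsHermitian) :
    ∃ μ : ℝ, (∃ x, x ≠ 0 ∧ A *ᵥ x = μ • x) ∧ ∀ z, z ⬝ᵥ A *ᵥ z ≤ μ * (z ⬝ᵥ z) := by
  classical
  set T := A.toEuclideanLin
  have hT : T.IsSymmetric := isSymmetric_toEuclideanLin_iff.mpr hA
  obtain ⟨x, hx, hx0⟩ := hT.hasEigenvalue_iSup_of_finiteDimensional.exists_hasEigenvector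
  refine ⟨_, ⟨ofLp x, by simpa using hx0, congrArg ofLp (Module.End.mem_eigenspace_iff.1 hx)⟩,
    fun z => ?_⟩
  rcases eq_or_ne z 0 with rfl | hz
  · simp
  have hz' : toLp 2 z ≠ 0 := by simpa using hz
  have hbdd : BddAbove (Set.range fun x : {x : EuclideanSpace ℝ n // x ≠ 0} =>
      RCLike.re (inner ℝ (T x) (x : EuclideanSpace ℝ n)) / ‖(x : EuclideanSpace ℝ n)‖ ^ 2) :=
    ⟨‖T.toContinuousLinearMap‖, by
      rintro _ ⟨x, rfl⟩
      exact (le_abs_self _).trans (T.toContinuousLinearMap.rayleighQuotient_le_norm x)⟩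
  have hle := le_ciSup hbdd ⟨toLp 2 z, hz'⟩
  have hnorm : ‖toLp 2 z‖ ^ 2 = z ⬝ᵥ z := by
    rw [← real_inner_self_eq_norm_sq, EuclideanSpace.inner_toLp_toLp, star_trivial]
  rw [div_le_iff₀ (by positivity)] at hle
  simpa [hnorm, T, EuclideanSpace.inner_toLp_toLp, dotProduct_comm] using hle

theorem dotProduct_mulVec_eq_of_mulVec_eq_smul {A : Matrix n n ℝ} {μ : ℝ} {x : n → ℝ}
    (hx : A *ᵥ x = μ • x) : x ⬝ᵥ A *ᵥ x = μ * (x ⬝ᵥ x) := by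
  rw [hx, dotProduct_smul, smul_eq_mul]

/-- `μ • 1 - A` is positive semidefinite and `y` is isotropic for it. -/
theorem mulVec_eq_smul_of_dotProduct_mulVec_eq {A : Matrix n n ℝ}
    (hA : A.IsHermitian) {μ : ℝ} (hle : ∀ z, z ⬝ᵥ A *ᵥ z ≤ μ * (z ⬝ᵥ z)) {y : n → ℝ}
    (hy : y ⬝ᵥ A *ᵥ y = μ * (y ⬝ᵥ y)) : A *ᵥ y = μ • y := by
  classical
  have hB : ∀ z, (μ • (1 : Matrix n n ℝ) - A) *ᵥ z = μ • z - A *ᵥ z := fun z => by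
    rw [sub_mulVec, smul_mulVec, one_mulVec]
  have hpsd : (μ • (1 : Matrix n n ℝ) - A).PosSemidef := by
    refine posSemidef_iff_dotProduct_mulVec.2
      ⟨(isHermitian_one.smul (.all μ)).sub hA, fun z => ?_⟩
    rw [star_trivial, hB, dotProduct_sub, dotProduct_smul, smul_eq_mul]
    linarith [hle z]
  have hBy := (hpsd.dotProduct_mulVec_zero_iff y).1 (by
    rw [star_trivial, hB, dotProduct_sub, dotProduct_smul, smul_eq_mul, hy, sub_self])
  rw [hB, sub_eq_zero] at hBy
  exact hBy.symm

theorem maxEigenvalue_eq_of_forall_dotProduct_mulVec_le {A : Matrix n n ℝ} {μ : ℝ}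
    {x : n → ℝ} (hx : x ≠ 0) (hAx : A *ᵥ x = μ • x)
    (hle : ∀ z, z ⬝ᵥ A *ᵥ z ≤ μ * (z ⬝ᵥ z)) : A.maxEigenvalue = μ := by
  refine IsGreatest.csSup_eq ⟨⟨x, hx, hAx⟩, ?_⟩
  rintro ν ⟨w, hw, hAw⟩
  have hww : 0 < w ⬝ᵥ w := by simpa using dotProduct_self_star_pos_iff.2 hw
  have := hle w
  rw [dotProduct_mulVec_eq_of_mulVec_eq_smul hAw] at this
  exact le_of_mul_le_mul_right this hww

theorem dotProduct_mulVec_le_maxEigenvalue [Nonempty n] {A : Matrix n n ℝ}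
    (hA : A.IsHermitian) (z : n → ℝ) : z ⬝ᵥ A *ᵥ z ≤ A.maxEigenvalue * (z ⬝ᵥ z) := by
  obtain ⟨μ, ⟨x, hx, hAx⟩, hle⟩ := exists_eigenvector_forall_dotProduct_mulVec_le hA
  rw [maxEigenvalue_eq_of_forall_dotProduct_mulVec_le hx hAx hle]
  exact hle z

/-- Replacing a top eigenvector by its entrywise absolute value does not decrease the Rayleigh
quotient. -/
theorem exists_nonneg_eigenvector_maxEigenvalue [Nonempty n]
    {A : Matrix n n ℝ} (hA : A.IsHermitian) (hA0 : ∀ i j, 0 ≤ A i j) :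
    ∃ y : n → ℝ, 0 ≤ y ∧ y ≠ 0 ∧ A *ᵥ y = A.maxEigenvalue • y := by
  obtain ⟨μ, ⟨x, hx, hAx⟩, hle⟩ := exists_eigenvector_forall_dotProduct_mulVec_le hA
  rw [maxEigenvalue_eq_of_forall_dotProduct_mulVec_le hx hAx hle]
  have habs : |x| ⬝ᵥ |x| = x ⬝ᵥ x := by
    simp only [dotProduct, Pi.abs_apply, abs_mul_abs_self]
  have hge : x ⬝ᵥ A *ᵥ x ≤ |x| ⬝ᵥ A *ᵥ |x| := by
    simp only [dotProduct, mulVec, Finset.mul_sum, Pi.abs_apply]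
    refine Finset.sum_le_sum fun i _ => Finset.sum_le_sum fun j _ => ?_
    calc x i * (A i j * x j) ≤ |x i * (A i j * x j)| := le_abs_self _
      _ = |x i| * (A i j * |x j|) := by rw [abs_mul, abs_mul, abs_of_nonneg (hA0 i j)]
  refine ⟨|x|, abs_nonneg x, by simpa using hx, mulVec_eq_smul_of_dotProduct_mulVec_eq hA hle ?_⟩
  refine (hle _).antisymm ?_
  rw [habs, ← dotProduct_mulVec_eq_of_mulVec_eq_smul hAx]
  exact hge

theorem eq_zero_of_mulVec_eq_smul_of_ne_zero {A : Matrix n n ℝ} (hA0 : ∀ i j, 0 ≤ A i j)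
    {μ : ℝ} {y : n → ℝ} (hy : 0 ≤ y) (hAy : A *ᵥ y = μ • y) {i j : n} (hi : y i = 0)
    (hij : A i j ≠ 0) : y j = 0 := by
  have hsum : ∑ k, A i k * y k = 0 := by
    simpa [mulVec, dotProduct, hi] using congrFun hAy i
  have := (Finset.sum_eq_zero_iff_of_nonneg fun k _ => mul_nonneg (hA0 i k) (hy k)).1 hsum j
    (Finset.mem_univ j)
  exact (mul_eq_zero.1 this).resolve_left hij

/-- Zeros of `y` propagate along the nonzero entries of `A`. -/
theorem pos_of_mulVec_eq_smul {A : Matrix n n ℝ} (hA0 : ∀ i j, 0 ≤ A i j)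
    (hconn : ∀ i j, ReflTransGen (fun i j => A i j ≠ 0) i j) {μ : ℝ} {y : n → ℝ} (hy : 0 ≤ y)
    (hy0 : y ≠ 0) (hAy : A *ᵥ y = μ • y) (i : n) : 0 < y i := by
  refine (hy i).lt_of_ne fun hi => hy0 (funext fun j => ?_)
  induction hconn i j with
  | refl => exact hi.symm
  | tail _ hjk ih => exact eq_zero_of_mulVec_eq_smul_of_ne_zero hA0 hy hAy ih hjk

theorem dotProduct_extend_zero {f : n → m} (hf : Function.Injective f) (v : m → ℝ)
    (y : n → ℝ) : v ⬝ᵥ Function.extend f y 0 = (v ∘ f) ⬝ᵥ y :=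
  (Fintype.sum_of_injective f hf _ _
    (fun j hj => by simp [Function.extend_apply' _ _ _ (by simpa using hj)])
    (fun i => by simp [hf.extend_apply])).symm

theorem exists_eigenvector_of_submatrix_equiv {A : Matrix m m ℝ} (e : n ≃ m) {μ : ℝ}
    (h : ∃ x : n → ℝ, x ≠ 0 ∧ A.submatrix e e *ᵥ x = μ • x) :
    ∃ x : m → ℝ, x ≠ 0 ∧ A *ᵥ x = μ • x := by
  obtain ⟨x, hx, hAx⟩ := h
  refine ⟨x ∘ e.symm, fun h => hx ?_, ?_⟩
  · ext i
    simpa using congrFun h (e i)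
  · rw [submatrix_mulVec_equiv] at hAx
    ext i
    simpa using congrFun hAx (e.symm i)

theorem maxEigenvalue_submatrix_equiv (A : Matrix m m ℝ) (e : n ≃ m) :
    (A.submatrix e e).maxEigenvalue = A.maxEigenvalue :=
  congrArg sSup <| Set.ext fun _ =>
    ⟨exists_eigenvector_of_submatrix_equiv e, fun h =>
      exists_eigenvector_of_submatrix_equiv e.symm (by simpa [submatrix_submatrix] using h)⟩

/-- The top eigenvector `y` of `B` is positive, so its extension `x` by zero is not an
eigenvector of `A`: `x w = 0 < (A *ᵥ x) w`. -/
theorem maxEigenvalue_lt_of_submatrix_eq {A : Matrix m m ℝ}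
    {B : Matrix n n ℝ} (hA : A.IsHermitian) (hA0 : ∀ i j, 0 ≤ A i j) {f : n → m}
    (hf : Function.Injective f) (hB : A.submatrix f f = B)
    (hconn : ∀ i j, ReflTransGen (fun i j => B i j ≠ 0) i j) {w : m} (hw : w ∉ Set.range f)
    {u : n} (hwu : A w (f u) ≠ 0) : B.maxEigenvalue < A.maxEigenvalue := by
  have : Nonempty n := ⟨u⟩
  have : Nonempty m := ⟨w⟩
  have hB0 : ∀ i j, 0 ≤ B i j := fun i j => hB ▸ hA0 (f i) (f j)
  obtain ⟨y, hy, hy0, hBy⟩ := exists_nonneg_eigenvector_maxEigenvalue (hB ▸ hA.submatrix f) hB0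
  have hypos := pos_of_mulVec_eq_smul hB0 hconn hy hy0 hBy
  set x := Function.extend f y 0
  have hxf : x ∘ f = y := Function.extend_comp hf y 0
  have hAxf : (A *ᵥ x) ∘ f = B *ᵥ y := by
    ext i
    rw [Function.comp_apply, mulVec, dotProduct_extend_zero hf, ← hB]
    rfl
  have hxx : x ⬝ᵥ x = y ⬝ᵥ y := by
    rw [dotProduct_extend_zero hf, hxf]
  have hxAx : x ⬝ᵥ A *ᵥ x = B.maxEigenvalue * (y ⬝ᵥ y) := by
    rw [dotProduct_comm, dotProduct_extend_zero hf, hAxf, dotProduct_comm,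
      dotProduct_mulVec_eq_of_mulVec_eq_smul hBy]
  have hle : B.maxEigenvalue ≤ A.maxEigenvalue := by
    have := dotProduct_mulVec_le_maxEigenvalue hA x
    rw [hxAx, hxx] at this
    exact le_of_mul_le_mul_right this (by simpa using dotProduct_self_star_pos_iff.2 hy0)
  refine hle.lt_of_ne fun heq => ?_
  have hAx : A *ᵥ x = A.maxEigenvalue • x :=
    mulVec_eq_smul_of_dotProduct_mulVec_eq hA (dotProduct_mulVec_le_maxEigenvalue hA)
      (by rw [hxAx, hxx, heq])
  have hAxw : (A *ᵥ x) w = ∑ i, A w (f i) * y i := by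
    rw [mulVec, dotProduct_extend_zero hf]
    rfl
  have hpos : 0 < (A *ᵥ x) w := by
    rw [hAxw]
    exact Finset.sum_pos' (fun i _ => mul_nonneg (hA0 _ _) (hy i))
      ⟨u, Finset.mem_univ u, mul_pos ((hA0 _ _).lt_of_ne' hwu) (hypos u)⟩
  have hxw : x w = 0 := Function.extend_apply' _ _ _ (by simpa using hw)
  rw [hAx, Pi.smul_apply, hxw, smul_zero] at hpos
  exact hpos.false

end Matrix

theorem adjT_comm (p q r : ℕ) (v w : TVertex p q r) : adjT p q r v w = adjT p q r w v := by
  rcases v with _ | (i | i | i) <;> rcases w with _ | (j | j | j) <;>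
    simp [adjT, pathEntry, or_comm]

theorem adjT_isHermitian (p q r : ℕ) : (adjT p q r).IsHermitian := by
  ext v w
  rw [conjTranspose_apply, star_trivial, adjT_comm]

theorem adjT_nonneg (p q r : ℕ) (v w : TVertex p q r) : 0 ≤ adjT p q r v w := by
  rcases v with _ | (i | i | i) <;> rcases w with _ | (j | j | j) <;>
    simp only [adjT, pathEntry, tipEntry] <;> positivity

theorem reflTransGen_adjT_none (p q r : ℕ) (v : TVertex p q r) :
    ReflTransGen (fun v w => adjT p q r v w ≠ 0) none v := by
  rcases v with _ | (⟨k, hk⟩ | ⟨k, hk⟩ | ⟨k, hk⟩)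
  · rfl
  all_goals
    induction k with
    | zero => exact .single (by simp [adjT, tipEntry])
    | succ k ih => exact (ih (by omega)).tail (by simp [adjT, pathEntry])

theorem reflTransGen_adjT (p q r : ℕ) (v w : TVertex p q r) :
    ReflTransGen (fun v w => adjT p q r v w ≠ 0) v w := by
  have hsymm : Function.swap (fun v w => adjT p q r v w ≠ 0) = fun v w => adjT p q r v w ≠ 0 := by
    funext v w
    rw [Function.swap, adjT_comm]
  have hswap := (reflTransGen_adjT_none p q r v).swap
  rw [hsymm] at hswap
  exact hswap.trans (reflTransGen_adjT_none p q r w)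

def armSwapLeft (p q r : ℕ) : TVertex p q r ≃ TVertex q p r :=
  Equiv.optionCongr <| (Equiv.sumAssoc _ _ _).symm.trans <|
    (Equiv.sumCongr (Equiv.sumComm _ _) (Equiv.refl _)).trans (Equiv.sumAssoc _ _ _)

def armSwapRight (p q r : ℕ) : TVertex p q r ≃ TVertex p r q :=
  Equiv.optionCongr <| Equiv.sumCongr (Equiv.refl _) (Equiv.sumComm _ _)

theorem adjT_submatrix_armSwapLeft (p q r : ℕ) :
    (adjT q p r).submatrix (armSwapLeft p q r) (armSwapLeft p q r) = adjT p q r := by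
  ext v w
  rcases v with _ | (i | i | i) <;> rcases w with _ | (j | j | j) <;> rfl

theorem adjT_submatrix_armSwapRight (p q r : ℕ) :
    (adjT p r q).submatrix (armSwapRight p q r) (armSwapRight p q r) = adjT p q r := by
  ext v w
  rcases v with _ | (i | i | i) <;> rcases w with _ | (j | j | j) <;> rfl

theorem muT_eq_maxEigenvalue (p q r : ℕ) : muT p q r = (adjT p q r).maxEigenvalue := rfl

theorem muT_comm_left (p q r : ℕ) : muT p q r = muT q p r := by
  rw [muT_eq_maxEigenvalue, muT_eq_maxEigenvalue, ← adjT_submatrix_armSwapLeft,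
    maxEigenvalue_submatrix_equiv]

theorem muT_comm_right (p q r : ℕ) : muT p q r = muT p r q := by
  rw [muT_eq_maxEigenvalue, muT_eq_maxEigenvalue, ← adjT_submatrix_armSwapRight,
    maxEigenvalue_submatrix_equiv]

def armExtend (p q r : ℕ) : TVertex p q r → TVertex p q (r + 1) :=
  Option.map (Sum.map id (Sum.map id (Fin.castLE (by omega))))

theorem armExtend_injective (p q r : ℕ) : Function.Injective (armExtend p q r) :=
  Option.map_injective (Sum.map_injective.2 ⟨Function.injective_id,
    Sum.map_injective.2 ⟨Function.injective_id, Fin.castLE_injective _⟩⟩)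

theorem adjT_submatrix_armExtend (p q r : ℕ) :
    (adjT p q (r + 1)).submatrix (armExtend p q r) (armExtend p q r) = adjT p q r := by
  ext v w
  rcases v with _ | (i | i | i) <;> rcases w with _ | (j | j | j) <;> rfl

theorem muT_lt_muT_succ_right (p q : ℕ) {r : ℕ} (hr : 1 ≤ r) : muT p q r < muT p q (r + 1) := by
  set w : TVertex p q (r + 1) := some (.inr (.inr ⟨r - 1, by omega⟩))
  have hw : w ∉ Set.range (armExtend p q r) := by
    rintro ⟨v, hv⟩
    rcases v with _ | (i | i | i) <;> simp [armExtend, w, Fin.ext_iff] at hv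
    omega
  obtain ⟨u, hwu⟩ : ∃ u, adjT p q (r + 1) w (armExtend p q r u) ≠ 0 := by
    obtain _ | _ | r := r
    · omega
    · exact ⟨none, by simp [adjT, w, armExtend, tipEntry]⟩
    · exact ⟨some (.inr (.inr ⟨r, by omega⟩)), by simp [adjT, w, armExtend, pathEntry]⟩
  exact maxEigenvalue_lt_of_submatrix_eq (adjT_isHermitian p q (r + 1)) (adjT_nonneg p q (r + 1))
    (armExtend_injective p q r) (adjT_submatrix_armExtend p q r) (reflTransGen_adjT p q r) hw hwu

/-- `μ(p,q,r)` is strictly increasing in each argument; in particular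
`μ(p,q,r) < μ(p,q,r+1)`. -/
theorem muT_strictMono_in_each_argument (p q r : ℕ) (hp : 2 ≤ p) (hq : 2 ≤ q) (hr : 2 ≤ r) :
    muT p q r < muT (p + 1) q r ∧ muT p q r < muT p (q + 1) r ∧
      muT p q r < muT p q (r + 1) := by
  refine ⟨?_, ?_, muT_lt_muT_succ_right p q (by omega)⟩
  · calc muT p q r = muT q r p := (muT_comm_left p q r).trans (muT_comm_right q p r)
      _ < muT q r (p + 1) := muT_lt_muT_succ_right q r (by omega)
      _ = muT (p + 1) q r := (muT_comm_right q r (p + 1)).trans (muT_comm_left q (p + 1) r)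
  · calc muT p q r = muT p r q := muT_comm_right p q r
      _ < muT p r (q + 1) := muT_lt_muT_succ_right p r (by omega)
      _ = muT p (q + 1) r := muT_comm_right p r (q + 1)
end

section
/- For every integer p ≥ 3, write μ_p = μ(p,p,p) and let m_p ≥ 1 be the unique real number with m_p + m_p^{−1} + 2 = μ_p². Then m_p^p (2 − m_p) = 2 m_p − 1. -/
/-! Write `μ = t + t⁻¹` with `t² = m` and `s n = powSubInv t n = tⁿ - t⁻ⁿ`. Along an arm the
eigenvector equations are the recurrence `x (k-1) + x (k+1) = μ x k` with a phantom zero just past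
the leaf; `s` solves it and vanishes at `0`, so counted from the leaf the entries are proportional
to `s`. Hence the neighbour of the centre carries `x_centre · s (p-1) / s p` on each arm, and the
equation at the centre becomes `3 s (p-1) = (t + t⁻¹) s p`; multiplying out by `t^(p+1)` gives
`m^p (2 - m) = 2m - 1`. The centre entry is nonzero because an eigenvector vanishing there
vanishes on every arm. -/

open Matrix

theorem exists_mulVec_eq_sSup_smul {ι : Type*} [Fintype ι] (A : Matrix ι ι ℝ)
    (h : sSup {μ : ℝ | ∃ x : ι → ℝ, x ≠ 0 ∧ A *ᵥ x = μ • x} ≠ 0) :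
    ∃ x : ι → ℝ, x ≠ 0 ∧ A *ᵥ x = sSup {μ : ℝ | ∃ x : ι → ℝ, x ≠ 0 ∧ A *ᵥ x = μ • x} • x := by
  set S := {μ : ℝ | ∃ x : ι → ℝ, x ≠ 0 ∧ A *ᵥ x = μ • x}
  have hfin : S.Finite :=
    (Module.End.finite_hasEigenvalue A.mulVecLin).subset fun μ ⟨x, hx, hAx⟩ =>
      Module.End.hasEigenvalue_of_hasEigenvector ⟨Module.End.mem_eigenspace_iff.mpr hAx, hx⟩
  have hne : S.Nonempty := by
    contrapose! h
    rw [h, Real.sSup_empty]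
  exact hne.csSup_mem hfin

theorem exists_sq_eq_and_eq_add_inv {m μ : ℝ} (hm : 0 < m) (h : μ ^ 2 = m + m⁻¹ + 2) :
    ∃ t : ℝ, t ^ 2 = m ∧ μ = t + t⁻¹ := by
  set s := √m
  have hs : s ^ 2 = m := Real.sq_sqrt hm.le
  have hs0 : s ≠ 0 := (Real.sqrt_pos.mpr hm).ne'
  have hμ : μ ^ 2 = (s + s⁻¹) ^ 2 := by
    rw [h, ← hs]
    field_simp
    ring
  rcases sq_eq_sq_iff_eq_or_eq_neg.mp hμ with hμ | hμ
  · exact ⟨s, hs, hμ⟩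
  · exact ⟨-s, by rw [neg_sq, hs], by rw [hμ, inv_neg, neg_add]⟩

noncomputable def powSubInv (t : ℝ) (n : ℕ) : ℝ := t ^ n - t⁻¹ ^ n

theorem powSubInv_add_two {t : ℝ} (ht : t ≠ 0) (n : ℕ) :
    powSubInv t n + powSubInv t (n + 2) = (t + t⁻¹) * powSubInv t (n + 1) := by
  simp only [powSubInv, inv_pow, pow_succ]
  field_simp
  ring

theorem powSubInv_ne_zero {t : ℝ} (ht0 : t ≠ 0) (ht : t ^ 2 ≠ 1) {n : ℕ} (hn : n ≠ 0) :
    powSubInv t n ≠ 0 := by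
  intro h
  have : (t ^ 2) ^ n = 1 :=
    calc (t ^ 2) ^ n = t ^ n * t ^ n := by ring
      _ = t ^ n * t⁻¹ ^ n := by rw [sub_eq_zero.mp h]
      _ = 1 := by rw [← mul_pow, mul_inv_cancel₀ ht0, one_pow]
  exact ht ((pow_eq_one_iff_of_nonneg (sq_nonneg t) hn).mp this)

theorem mul_powSubInv_eq_of_recurrence {t : ℝ} (ht : t ≠ 0) {w : ℕ → ℝ} {N : ℕ} (h0 : w 0 = 0)
    (hrec : ∀ j < N, w j + w (j + 2) = (t + t⁻¹) * w (j + 1)) :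
    ∀ j ≤ N + 1, w j * powSubInv t 1 = w 1 * powSubInv t j := by
  have hpair : ∀ j ≤ N, w j * powSubInv t 1 = w 1 * powSubInv t j ∧
      w (j + 1) * powSubInv t 1 = w 1 * powSubInv t (j + 1) := by
    intro j hj
    induction j with
    | zero => simp [h0, powSubInv]
    | succ j ih =>
      obtain ⟨h1, h2⟩ := ih (by omega)
      refine ⟨h2, ?_⟩
      linear_combination powSubInv t 1 * hrec j (by omega) - h1 + (t + t⁻¹) * h2 -
        w 1 * powSubInv_add_two ht j
  rintro (_ | j) hj
  · simp [h0, powSubInv]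
  · exact (hpair j (by omega)).2

/-- An arm of `n` vertices with centre value `c`, read from the centre outwards: index `0` is the
centre, `k + 1` the `k`-th arm vertex, and every index past the leaf carries `0`. -/
def armSeq {n : ℕ} (c : ℝ) (u : Fin n → ℝ) : ℕ → ℝ
  | 0 => c
  | k + 1 => if h : k < n then u ⟨k, h⟩ else 0

theorem armSeq_zero {n : ℕ} (c : ℝ) (u : Fin n → ℝ) : armSeq c u 0 = c := rfl

theorem armSeq_succ {n : ℕ} (c : ℝ) (u : Fin n → ℝ) (i : Fin n) : armSeq c u (i + 1) = u i :=
  dif_pos i.isLt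

theorem sum_ite_val_eq_armSeq {n : ℕ} (c : ℝ) (u : Fin n → ℝ) (k : ℕ) :
    ∑ j : Fin n, (if (j : ℕ) = k then u j else 0) = armSeq c u (k + 1) := by
  by_cases h : k < n
  · simp only [armSeq, dif_pos h]
    rw [Finset.sum_eq_single_of_mem ⟨k, h⟩ (Finset.mem_univ _)
      fun j _ hj => if_neg fun hjk => hj (Fin.ext hjk), if_pos rfl]
  · simp only [armSeq, dif_neg h]
    exact Finset.sum_eq_zero fun j _ => if_neg (by omega)

theorem sum_tipEntry_mul {n : ℕ} (c : ℝ) (u : Fin n → ℝ) :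
    ∑ j : Fin n, tipEntry j * u j = armSeq c u 1 := by
  simp only [tipEntry, ite_mul, one_mul, zero_mul, sum_ite_val_eq_armSeq c u 0]

theorem tipEntry_mul_add_sum_pathEntry_mul {n : ℕ} (c : ℝ) (u : Fin n → ℝ) (i : ℕ) :
    tipEntry i * c + ∑ j : Fin n, pathEntry i j * u j = armSeq c u i + armSeq c u (i + 2) := by
  have hsplit : ∀ j : Fin n, pathEntry i j * u j =
      (if (j : ℕ) = i + 1 then u j else 0) + (if (j : ℕ) + 1 = i then u j else 0) := by
    intro j
    unfold pathEntry
    split_ifs <;> first | ring1 | (exfalso; omega)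
  simp only [hsplit, Finset.sum_add_distrib, sum_ite_val_eq_armSeq c u]
  rcases i with _ | i
  · simp [tipEntry, armSeq]
  · simp [tipEntry, sum_ite_val_eq_armSeq c u]
    ring

section Arm

variable {n : ℕ} {c t : ℝ} {u : Fin n → ℝ}

theorem armSeq_sub_mul_powSubInv_one (ht : t ≠ 0)
    (hrec : ∀ i : Fin n, armSeq c u i + armSeq c u (i + 2) = (t + t⁻¹) * u i) :
    ∀ j ≤ n + 1, armSeq c u (n + 1 - j) * powSubInv t 1 = armSeq c u n * powSubInv t j := by
  refine mul_powSubInv_eq_of_recurrence ht (by simp [armSeq]) fun j hj => ?_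
  have h := hrec ⟨n - 1 - j, by omega⟩
  rw [← armSeq_succ c u] at h
  simp only at h
  rw [show n - 1 - j + 2 = n + 1 - j by omega, show n - 1 - j + 1 = n + 1 - (j + 1) by omega,
    show n - 1 - j = n + 1 - (j + 2) by omega] at h
  linear_combination h

theorem armSeq_one_eq (ht0 : t ≠ 0) (ht : t ^ 2 ≠ 1)
    (hrec : ∀ i : Fin n, armSeq c u i + armSeq c u (i + 2) = (t + t⁻¹) * u i) :
    armSeq c u 1 = c * (powSubInv t n / powSubInv t (n + 1)) := by
  rw [mul_div_assoc', eq_div_iff (powSubInv_ne_zero ht0 ht n.succ_ne_zero)]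
  have hcenter := armSeq_sub_mul_powSubInv_one ht0 hrec (n + 1) le_rfl
  have hnext := armSeq_sub_mul_powSubInv_one ht0 hrec n (by omega)
  simp only [Nat.sub_self, Nat.add_sub_cancel_left, armSeq_zero] at hcenter hnext
  refine mul_right_cancel₀ (powSubInv_ne_zero ht0 ht one_ne_zero) ?_
  linear_combination powSubInv t (n + 1) * hnext - powSubInv t n * hcenter

theorem eq_zero_of_armSeq_recurrence (ht0 : t ≠ 0) (ht : t ^ 2 ≠ 1)
    (hrec : ∀ i : Fin n, armSeq 0 u i + armSeq 0 u (i + 2) = (t + t⁻¹) * u i) : u = 0 := by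
  have h := armSeq_sub_mul_powSubInv_one ht0 hrec
  have hlast : armSeq 0 u n = 0 := by
    have := h (n + 1) le_rfl
    simp only [Nat.sub_self, armSeq_zero, zero_mul] at this
    exact (mul_eq_zero.mp this.symm).resolve_right (powSubInv_ne_zero ht0 ht (by omega))
  funext i
  have := h (n - i) (by omega)
  rw [hlast, zero_mul, show n + 1 - (n - i) = i + 1 by omega, armSeq_succ] at this
  exact (mul_eq_zero.mp this).resolve_right (powSubInv_ne_zero ht0 ht one_ne_zero)

end Arm

section Tree

variable {p q r : ℕ}

def firstArm (x : TVertex p q r → ℝ) : Fin (p - 1) → ℝ := fun i => x (some (.inl i))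

def secondArm (x : TVertex p q r → ℝ) : Fin (q - 1) → ℝ := fun i => x (some (.inr (.inl i)))

def thirdArm (x : TVertex p q r → ℝ) : Fin (r - 1) → ℝ := fun i => x (some (.inr (.inr i)))

theorem adjT_mulVec_none (x : TVertex p q r → ℝ) :
    (adjT p q r *ᵥ x) none = armSeq (x none) (firstArm x) 1 + armSeq (x none) (secondArm x) 1 +
      armSeq (x none) (thirdArm x) 1 := by
  simp [adjT, mulVec, dotProduct, Fintype.sum_option, Fintype.sum_sum_type,
    sum_tipEntry_mul (x none), add_assoc]
  rfl

theorem adjT_mulVec_firstArm (x : TVertex p q r → ℝ) (i : Fin (p - 1)) :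
    (adjT p q r *ᵥ x) (some (.inl i)) =
      armSeq (x none) (firstArm x) i + armSeq (x none) (firstArm x) (i + 2) := by
  simp [adjT, mulVec, dotProduct, Fintype.sum_option, Fintype.sum_sum_type,
    ← tipEntry_mul_add_sum_pathEntry_mul, firstArm]

theorem adjT_mulVec_secondArm (x : TVertex p q r → ℝ) (i : Fin (q - 1)) :
    (adjT p q r *ᵥ x) (some (.inr (.inl i))) =
      armSeq (x none) (secondArm x) i + armSeq (x none) (secondArm x) (i + 2) := by
  simp [adjT, mulVec, dotProduct, Fintype.sum_option, Fintype.sum_sum_type,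
    ← tipEntry_mul_add_sum_pathEntry_mul, secondArm]

theorem adjT_mulVec_thirdArm (x : TVertex p q r → ℝ) (i : Fin (r - 1)) :
    (adjT p q r *ᵥ x) (some (.inr (.inr i))) =
      armSeq (x none) (thirdArm x) i + armSeq (x none) (thirdArm x) (i + 2) := by
  simp [adjT, mulVec, dotProduct, Fintype.sum_option, Fintype.sum_sum_type,
    ← tipEntry_mul_add_sum_pathEntry_mul, thirdArm]

theorem sum_powSubInv_div_eq_of_mulVec_eq (hp : 1 ≤ p) (hq : 1 ≤ q) (hr : 1 ≤ r)
    {t : ℝ} (ht0 : t ≠ 0) (ht : t ^ 2 ≠ 1) {x : TVertex p q r → ℝ} (hx : x ≠ 0)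
    (hxe : adjT p q r *ᵥ x = (t + t⁻¹) • x) :
    powSubInv t (p - 1) / powSubInv t p + powSubInv t (q - 1) / powSubInv t q +
      powSubInv t (r - 1) / powSubInv t r = t + t⁻¹ := by
  have hrec₁ : ∀ i : Fin (p - 1), armSeq (x none) (firstArm x) i +
      armSeq (x none) (firstArm x) (i + 2) = (t + t⁻¹) * firstArm x i :=
    fun i => by rw [← adjT_mulVec_firstArm, hxe]; rfl
  have hrec₂ : ∀ i : Fin (q - 1), armSeq (x none) (secondArm x) i +
      armSeq (x none) (secondArm x) (i + 2) = (t + t⁻¹) * secondArm x i :=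
    fun i => by rw [← adjT_mulVec_secondArm, hxe]; rfl
  have hrec₃ : ∀ i : Fin (r - 1), armSeq (x none) (thirdArm x) i +
      armSeq (x none) (thirdArm x) (i + 2) = (t + t⁻¹) * thirdArm x i :=
    fun i => by rw [← adjT_mulVec_thirdArm, hxe]; rfl
  have hc : x none ≠ 0 := by
    intro hc
    rw [hc] at hrec₁ hrec₂ hrec₃
    refine hx (funext fun v => ?_)
    rcases v with _ | i | i | i
    · exact hc
    · exact congrFun (eq_zero_of_armSeq_recurrence ht0 ht hrec₁) i
    · exact congrFun (eq_zero_of_armSeq_recurrence ht0 ht hrec₂) i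
    · exact congrFun (eq_zero_of_armSeq_recurrence ht0 ht hrec₃) i
  have h₁ := armSeq_one_eq ht0 ht hrec₁
  have h₂ := armSeq_one_eq ht0 ht hrec₂
  have h₃ := armSeq_one_eq ht0 ht hrec₃
  rw [Nat.sub_add_cancel hp] at h₁
  rw [Nat.sub_add_cancel hq] at h₂
  rw [Nat.sub_add_cancel hr] at h₃
  have hcenter := congrFun hxe none
  rw [adjT_mulVec_none, h₁, h₂, h₃, ← mul_add, ← mul_add, Pi.smul_apply, smul_eq_mul,
    mul_comm _ (x none)] at hcenter
  exact mul_left_cancel₀ hc hcenter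

end Tree

theorem sq_pow_mul_two_sub_eq {t : ℝ} (ht : t ≠ 0) {p : ℕ} (hp : 1 ≤ p)
    (h : 3 * powSubInv t (p - 1) = (t + t⁻¹) * powSubInv t p) :
    (t ^ 2) ^ p * (2 - t ^ 2) = 2 * t ^ 2 - 1 := by
  obtain ⟨n, rfl⟩ := Nat.exists_eq_add_of_le' hp
  simp only [powSubInv, Nat.add_sub_cancel, pow_succ, inv_pow] at h
  have hn : t ^ n ≠ 0 := pow_ne_zero n ht
  field_simp at h
  rw [show (t ^ 2) ^ (n + 1) = (t ^ n) ^ 2 * t ^ 2 by ring]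
  linear_combination h

/-- For `p ≥ 3`, if `μ_p = μ(p,p,p)` and `m_p ≥ 1` satisfies
`m_p + m_p⁻¹ + 2 = μ_p²`, then `m_p ^ p * (2 - m_p) = 2 * m_p - 1`. -/
theorem mp_equation_of_muT (p : ℕ) (hp : 3 ≤ p) (m : ℝ) (hm : 1 ≤ m)
    (heq : m + m⁻¹ + 2 = (muT p p p) ^ 2) :
    m ^ p * (2 - m) = 2 * m - 1 := by
  rcases hm.eq_or_lt with rfl | hm
  · norm_num
  obtain ⟨t, rfl, hμ⟩ := exists_sq_eq_and_eq_add_inv (by positivity) heq.symm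
  have ht0 : t ≠ 0 := by rintro rfl; norm_num at hm
  have hμ0 : muT p p p ≠ 0 := by
    rw [← pow_ne_zero_iff two_ne_zero, ← heq]
    positivity
  obtain ⟨x, hx, hxe⟩ := exists_mulVec_eq_sSup_smul (adjT p p p) hμ0
  have hchar := sum_powSubInv_div_eq_of_mulVec_eq (by omega) (by omega) (by omega) ht0 hm.ne'
    hx (hμ ▸ hxe)
  refine sq_pow_mul_two_sub_eq ht0 (by omega) ?_
  rw [← hchar]
  field_simp [powSubInv_ne_zero ht0 hm.ne' (n := p) (by omega)]
  ring
end

section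
/- Let G be the graph whose vertex set is V = {∗} ∪ ({1,2,3} × ℕ), where ∗ is adjacent to (i,0) for each i ∈ {1,2,3}, and (i,n) is adjacent to (i,n+1) for all i and n, with no other adjacencies. Then the adjacency operator on ℓ²(V; ℝ), sending a function f to the function v ↦ Σ_{w adjacent to v} f(w), is a well-defined bounded self-adjoint operator of operator norm 3/√2. Moreover 3/√2 is an eigenvalue: the ℓ² function f with f(∗) = √2 and f(i,n) = 2^{−n/2} satisfies A f = (3/√2) f. -/
/-!
A positive eigenfunction `h` of the adjacency operator, `∑_{w ~ v} h w = c h v`, bounds its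
norm on `ℓ²` by `c` (Schur test): Cauchy–Schwarz weighted by `h` gives
`(∑_{w ~ v} u w)² ≤ c ∑_{w ~ v} (h v / h w) u w²`, and summing over `v` and exchanging the
order of summation over edges turns the right side into `c² ∑ u²`. On the spider,
`h = √2` at the centre and `h = 2^{-n/2}` at the `n`-th vertex of each ray is such an
eigenfunction with `c = 3/√2`, and it is square summable, so the bound is attained.
-/

/-- The vertex set of the infinite spider tree `T_{∞,∞,∞}`: a central vertex
`Sum.inl ()` together with three infinite rays `{1,2,3} × ℕ`. -/
abbrev SpiderV : Type := Unit ⊕ (Fin 3 × ℕ)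

/-- The adjacency relation of the spider: the centre is adjacent to `(i, 0)`
for each `i`, and `(i, n)` is adjacent to `(i, n+1)`. -/
def spiderAdj : SpiderV → SpiderV → Bool
  | Sum.inl _, Sum.inl _ => false
  | Sum.inl _, Sum.inr (_, n) => n == 0
  | Sum.inr (_, n), Sum.inl _ => n == 0
  | Sum.inr (i, m), Sum.inr (j, n) => i == j && (m + 1 == n || n + 1 == m)

open scoped ENNReal InnerProductSpace

theorem ContinuousLinearMap.norm_le_opNorm_of_apply_eq_smul {𝕜 E : Type*}
    [NontriviallyNormedField 𝕜] [NormedAddCommGroup E] [NormedSpace 𝕜 E] (A : E →L[𝕜] E)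
    {c : 𝕜} {x : E} (hx : x ≠ 0) (hAx : A x = c • x) : ‖c‖ ≤ ‖A‖ :=
  le_of_mul_le_mul_right (by simpa [hAx, norm_smul] using A.le_opNorm x) (norm_pos_iff.2 hx)

theorem memℓp_two_iff_summable_sq {V : Type*} {u : V → ℝ} :
    Memℓp u 2 ↔ Summable fun v => u v ^ 2 := by
  rw [memℓp_gen_iff (by norm_num)]
  simp

theorem lp.norm_sq_eq_tsum_sq {V : Type*} (f : lp (fun _ : V => ℝ) 2) :
    ‖f‖ ^ 2 = ∑' v, f v ^ 2 := by
  rw [← real_inner_self_eq_norm_sq, lp.inner_eq_tsum]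
  simp [sq]

namespace SimpleGraph

variable {V : Type*} (G : SimpleGraph V) [G.LocallyFinite]

noncomputable def neighborSum (u : V → ℝ) (v : V) : ℝ := ∑ w ∈ G.neighborFinset v, u w

theorem hasSum_ite_adj {M : Type*} [AddCommMonoid M] [TopologicalSpace M] [DecidableRel G.Adj]
    (v : V) (u : V → M) :
    HasSum (fun w => if G.Adj v w then u w else 0) (∑ w ∈ G.neighborFinset v, u w) := by
  have h : HasSum _ _ := hasSum_sum_of_ne_finset_zero (f := fun w => if G.Adj v w then u w else 0)
    (s := G.neighborFinset v) fun w hw => if_neg fun h => hw ((G.mem_neighborFinset v w).2 h)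
  rwa [Finset.sum_congr rfl fun w hw => if_pos ((G.mem_neighborFinset v w).1 hw)] at h

theorem tsum_sum_neighborFinset_comm (φ : V → V → ℝ≥0∞) :
    ∑' v, ∑ w ∈ G.neighborFinset v, φ v w =
      ∑' w, ∑ v ∈ G.neighborFinset w, φ v w := by
  classical
  simp_rw [← (G.hasSum_ite_adj _ _).tsum_eq]
  rw [ENNReal.tsum_comm]
  simp_rw [G.adj_comm]

theorem isSymmetric_of_apply_eq_neighborSum
    (A : lp (fun _ : V => ℝ) 2 →L[ℝ] lp (fun _ : V => ℝ) 2)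
    (hA : ∀ f v, A f v = G.neighborSum (⇑f) v) :
    (A : lp (fun _ : V => ℝ) 2 →ₗ[ℝ] _).IsSymmetric := by
  classical
  intro f g
  let F : V × V → ℝ := fun p => if G.Adj p.1 p.2 then f p.2 * g p.1 else 0
  let absf : lp (fun _ : V => ℝ) 2 := ⟨fun v => ‖f v‖, (lp.memℓp f).norm⟩
  let absg : lp (fun _ : V => ℝ) 2 := ⟨fun v => ‖g v‖, (lp.memℓp g).norm⟩
  have hrow (v : V) (u a : V → ℝ) : HasSum (fun w => if G.Adj v w then u w * a v else 0)
      (G.neighborSum u v * a v) := by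
    rw [neighborSum, Finset.sum_mul]; exact G.hasSum_ite_adj v _
  have hcol (w : V) (a u : V → ℝ) : HasSum (fun v => if G.Adj v w then a w * u v else 0)
      (a w * G.neighborSum u w) := by
    simp_rw [G.adj_comm _ w]; rw [neighborSum, Finset.mul_sum]; exact G.hasSum_ite_adj w _
  -- `|F|` sums to `⟪A |f|, |g|⟫`.
  have hF : Summable F := by
    refine Summable.of_norm_bounded
      (g := fun p => if G.Adj p.1 p.2 then ‖f p.2‖ * ‖g p.1‖ else 0) ?_ fun p => ?_
    · refine (summable_prod_of_nonneg fun p => ?_).2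
        ⟨fun v => (hrow v ⇑absf ⇑absg).summable, ?_⟩
      · dsimp only; split_ifs <;> positivity
      · refine (lp.summable_inner (A absf) absg).congr fun v => ?_
        rw [hA, RCLike.inner_apply, conj_trivial, mul_comm]
        exact (hrow v _ _).tsum_eq.symm
    · simp only [F]; split_ifs <;> simp
  rw [lp.inner_eq_tsum, lp.inner_eq_tsum]
  calc ∑' v, ⟪A f v, g v⟫_ℝ = ∑' v, ∑' w, F (v, w) := by
        refine tsum_congr fun v => ?_
        rw [(hrow v _ _).tsum_eq, hA, RCLike.inner_apply, conj_trivial, mul_comm]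
    _ = ∑' w, ∑' v, F (v, w) := (Summable.tsum_comm' (f := fun v w => F (v, w)) hF
          (fun v => (hrow v ⇑f ⇑g).summable) fun w => (hcol w ⇑f ⇑g).summable).symm
    _ = ∑' w, ⟪f w, A g w⟫_ℝ := by
        refine tsum_congr fun w => ?_
        rw [(hcol w _ _).tsum_eq, hA, RCLike.inner_apply, conj_trivial, mul_comm]

variable {G} {h : V → ℝ} {c : ℝ}

theorem sq_neighborSum_le (hpos : ∀ v, 0 < h v) (heig : ∀ v, G.neighborSum h v = c * h v)
    (u : V → ℝ) (v : V) :
    G.neighborSum u v ^ 2 ≤ ∑ w ∈ G.neighborFinset v, c * (h v / h w) * u w ^ 2 := by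
  have hcs := Finset.sum_sq_le_sum_mul_sum_of_sq_le_mul (G.neighborFinset v)
    (r := u) (f := h) (g := fun w => u w ^ 2 / h w) (fun w _ => (hpos w).le)
    (fun w _ => div_nonneg (sq_nonneg _) (hpos w).le)
    fun w _ => (mul_div_cancel₀ _ (hpos w).ne').ge
  calc G.neighborSum u v ^ 2
      ≤ (∑ w ∈ G.neighborFinset v, h w) * ∑ w ∈ G.neighborFinset v, u w ^ 2 / h w := hcs
    _ = ∑ w ∈ G.neighborFinset v, c * (h v / h w) * u w ^ 2 := by
      rw [← neighborSum, heig, Finset.mul_sum]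
      exact Finset.sum_congr rfl fun w _ => by ring

/-- The Schur test, with the positive eigenfunction `h` as weight. -/
theorem tsum_ofReal_sq_neighborSum_le (hc : 0 ≤ c) (hpos : ∀ v, 0 < h v)
    (heig : ∀ v, G.neighborSum h v = c * h v) (u : V → ℝ) :
    ∑' v, ENNReal.ofReal (G.neighborSum u v ^ 2)
      ≤ ENNReal.ofReal (c ^ 2) * ∑' v, ENNReal.ofReal (u v ^ 2) := by
  have hnonneg : ∀ v w, 0 ≤ c * (h v / h w) * u w ^ 2 := fun v w =>
    mul_nonneg (mul_nonneg hc (div_nonneg (hpos v).le (hpos w).le)) (sq_nonneg _)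
  calc ∑' v, ENNReal.ofReal (G.neighborSum u v ^ 2)
      ≤ ∑' v, ∑ w ∈ G.neighborFinset v, ENNReal.ofReal (c * (h v / h w) * u w ^ 2) :=
        ENNReal.tsum_le_tsum fun v => by
          rw [← ENNReal.ofReal_sum_of_nonneg fun w _ => hnonneg v w]
          exact ENNReal.ofReal_le_ofReal (sq_neighborSum_le hpos heig u v)
    _ = ∑' w, ∑ v ∈ G.neighborFinset w, ENNReal.ofReal (c * (h v / h w) * u w ^ 2) :=
        G.tsum_sum_neighborFinset_comm _
    _ = ∑' w, ENNReal.ofReal (c ^ 2) * ENNReal.ofReal (u w ^ 2) := by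
        refine tsum_congr fun w => ?_
        rw [← ENNReal.ofReal_sum_of_nonneg fun v _ => hnonneg v w,
          ← ENNReal.ofReal_mul (sq_nonneg c), ← Finset.sum_mul, ← Finset.mul_sum,
          ← Finset.sum_div, ← neighborSum, heig, mul_div_cancel_right₀ _ (hpos w).ne']
        ring_nf
    _ = ENNReal.ofReal (c ^ 2) * ∑' v, ENNReal.ofReal (u v ^ 2) := ENNReal.tsum_mul_left

theorem summable_sq_neighborSum (hc : 0 ≤ c) (hpos : ∀ v, 0 < h v)
    (heig : ∀ v, G.neighborSum h v = c * h v) {u : V → ℝ} (hu : Summable fun v => u v ^ 2) :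
    Summable fun v => G.neighborSum u v ^ 2 := by
  have hfin : ∑' v, ENNReal.ofReal (G.neighborSum u v ^ 2) ≠ ⊤ := by
    refine ne_top_of_le_ne_top ?_ (tsum_ofReal_sq_neighborSum_le hc hpos heig u)
    rw [← ENNReal.ofReal_tsum_of_nonneg (fun v => sq_nonneg _) hu]
    exact ENNReal.mul_ne_top ENNReal.ofReal_ne_top ENNReal.ofReal_ne_top
  exact (ENNReal.summable_toReal hfin).congr fun v => ENNReal.toReal_ofReal (sq_nonneg _)

theorem tsum_sq_neighborSum_le (hc : 0 ≤ c) (hpos : ∀ v, 0 < h v)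
    (heig : ∀ v, G.neighborSum h v = c * h v) {u : V → ℝ} (hu : Summable fun v => u v ^ 2) :
    ∑' v, G.neighborSum u v ^ 2 ≤ c ^ 2 * ∑' v, u v ^ 2 := by
  rw [← ENNReal.ofReal_le_ofReal_iff (by positivity),
    ENNReal.ofReal_tsum_of_nonneg (fun v => sq_nonneg _) (summable_sq_neighborSum hc hpos heig hu),
    ENNReal.ofReal_mul (sq_nonneg _), ENNReal.ofReal_tsum_of_nonneg (fun v => sq_nonneg _) hu]
  exact tsum_ofReal_sq_neighborSum_le hc hpos heig u

theorem exists_continuousLinearMap_neighborSum_norm_le (hc : 0 ≤ c) (hpos : ∀ v, 0 < h v)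
    (heig : ∀ v, G.neighborSum h v = c * h v) :
    ∃ A : lp (fun _ : V => ℝ) 2 →L[ℝ] lp (fun _ : V => ℝ) 2,
      (∀ f v, A f v = G.neighborSum (⇑f) v) ∧ ‖A‖ ≤ c := by
  have hsq (f : lp (fun _ : V => ℝ) 2) : Summable fun v => f v ^ 2 :=
    memℓp_two_iff_summable_sq.1 f.2
  let L : lp (fun _ : V => ℝ) 2 →ₗ[ℝ] lp (fun _ : V => ℝ) 2 :=
    { toFun f := ⟨G.neighborSum ⇑f,
        memℓp_two_iff_summable_sq.2 (summable_sq_neighborSum hc hpos heig (hsq f))⟩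
      map_add' f g := lp.ext <| funext fun v => Finset.sum_add_distrib
      map_smul' a f := lp.ext <| funext fun v => (Finset.mul_sum _ _ _).symm }
  have hL (f : lp (fun _ : V => ℝ) 2) : ‖L f‖ ≤ c * ‖f‖ := by
    refine (pow_le_pow_iff_left₀ (norm_nonneg _) (by positivity) two_ne_zero).1 ?_
    rw [mul_pow, lp.norm_sq_eq_tsum_sq, lp.norm_sq_eq_tsum_sq]
    exact tsum_sq_neighborSum_le hc hpos heig (hsq f)
  exact ⟨L.mkContinuous c hL, fun _ _ => rfl, L.mkContinuous_norm_le hc hL⟩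

end SimpleGraph

theorem spiderAdj_comm (v w : SpiderV) : spiderAdj v w = spiderAdj w v := by
  rcases v with ⟨⟩ | ⟨i, m⟩ <;> rcases w with ⟨⟩ | ⟨j, n⟩ <;> simp only [spiderAdj]
  · rw [Bool.eq_iff_iff]
    simp only [Bool.and_eq_true, Bool.or_eq_true, beq_iff_eq]
    constructor <;> rintro ⟨rfl, h⟩ <;> exact ⟨rfl, h.symm⟩

def spiderGraph : SimpleGraph SpiderV where
  Adj v w := spiderAdj v w
  symm := ⟨fun v w h => (spiderAdj_comm v w).symm.trans h⟩
  loopless := ⟨fun v h => by rcases v with ⟨⟩ | ⟨i, n⟩ <;> simp [spiderAdj] at h⟩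

-- With this instance `if spiderGraph.Adj v w` is the `if spiderAdj v w` of the statement.
instance : DecidableRel spiderGraph.Adj := fun v w => inferInstanceAs (Decidable (spiderAdj v w))

def spiderNeighbors : SpiderV → Finset SpiderV
  | Sum.inl _ => {Sum.inr (0, 0), Sum.inr (1, 0), Sum.inr (2, 0)}
  | Sum.inr (i, 0) => {Sum.inl (), Sum.inr (i, 1)}
  | Sum.inr (i, n + 1) => {Sum.inr (i, n), Sum.inr (i, n + 2)}

theorem mem_spiderNeighbors (v w : SpiderV) : w ∈ spiderNeighbors v ↔ spiderGraph.Adj v w := by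
  change _ ↔ spiderAdj v w = true
  rcases v with ⟨⟩ | ⟨i, m⟩ <;> rcases w with ⟨⟩ | ⟨j, n⟩
  · simp [spiderAdj, spiderNeighbors]
  · have hj := j.isLt
    simp only [spiderAdj, spiderNeighbors, Finset.mem_insert, Finset.mem_singleton, Sum.inr.injEq,
      Prod.mk.injEq, beq_iff_eq, Fin.ext_iff, Fin.val_zero, Fin.val_one, Fin.val_two]
    omega
  · cases m <;> simp [spiderAdj, spiderNeighbors]
  · cases m <;>
      simp only [spiderAdj, spiderNeighbors, Finset.mem_insert, Finset.mem_singleton,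
        Sum.inr.injEq, Prod.mk.injEq, beq_iff_eq, Fin.ext_iff, Bool.and_eq_true, Bool.or_eq_true,
        reduceCtorEq, false_or, or_false] <;>
      omega

instance : spiderGraph.LocallyFinite := fun v =>
  Fintype.ofFinset (spiderNeighbors v) (mem_spiderNeighbors v)

theorem spiderGraph_neighborFinset (v : SpiderV) :
    spiderGraph.neighborFinset v = spiderNeighbors v :=
  Set.toFinset_ofFinset _ _

noncomputable def spiderPerron : SpiderV → ℝ
  | Sum.inl _ => Real.sqrt 2
  | Sum.inr (_, n) => (Real.sqrt 2)⁻¹ ^ n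

theorem spiderPerron_pos (v : SpiderV) : 0 < spiderPerron v := by
  rcases v with ⟨⟩ | ⟨_, n⟩ <;> simp [spiderPerron]

theorem neighborSum_spiderPerron (v : SpiderV) :
    spiderGraph.neighborSum spiderPerron v = 3 / Real.sqrt 2 * spiderPerron v := by
  have hs : Real.sqrt 2 ^ 2 = 2 := Real.sq_sqrt zero_le_two
  rw [SimpleGraph.neighborSum, spiderGraph_neighborFinset]
  rcases v with ⟨⟩ | ⟨i, _ | n⟩
  · simp [spiderNeighbors, spiderPerron]
    norm_num
  · simp [spiderNeighbors, spiderPerron]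
    field_simp
    linear_combination hs
  · simp [spiderNeighbors, spiderPerron]
    field_simp
    linear_combination (Real.sqrt 2 ^ n * Real.sqrt 2 ^ (n + 2)) * hs

theorem memℓp_spiderPerron : Memℓp spiderPerron 2 := by
  refine memℓp_two_iff_summable_sq.2 (Summable.sum _ Summable.of_finite ?_)
  have hray : Summable fun p : Fin 3 × ℕ => (2⁻¹ : ℝ) ^ p.2 :=
    (summable_prod_of_nonneg fun p => by positivity).2
      ⟨fun _ => summable_geometric_of_lt_one (by norm_num) (by norm_num), Summable.of_finite⟩
  refine hray.congr fun ⟨i, n⟩ => ?_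
  change (2⁻¹ : ℝ) ^ n = ((Real.sqrt 2)⁻¹ ^ n) ^ 2
  rw [← pow_mul, mul_comm, pow_mul, inv_pow (Real.sqrt 2) 2, Real.sq_sqrt zero_le_two]

/-- The adjacency operator of the infinite spider tree is a well-defined
bounded self-adjoint operator on `ℓ²` of norm `3/√2`, and `3/√2` is an
eigenvalue, with eigenvector taking value `√2` at the centre and `2^{-n/2}`
at the `n`-th vertex of each ray. -/
theorem spider_adjacency_operator_norm :
    ∃ A : lp (fun _ : SpiderV => ℝ) 2 →L[ℝ] lp (fun _ : SpiderV => ℝ) 2,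
      (∀ f : lp (fun _ : SpiderV => ℝ) 2, ∀ v : SpiderV,
        A f v = ∑' w : SpiderV, if spiderAdj v w then f w else 0) ∧
      (∀ f g : lp (fun _ : SpiderV => ℝ) 2, (inner ℝ (A f) g : ℝ) = inner ℝ f (A g)) ∧
      ‖A‖ = 3 / Real.sqrt 2 ∧
      ∃ f₀ : lp (fun _ : SpiderV => ℝ) 2, f₀ ≠ 0 ∧
        f₀ (Sum.inl ()) = Real.sqrt 2 ∧
        (∀ i : Fin 3, ∀ n : ℕ, f₀ (Sum.inr (i, n)) = (Real.sqrt 2)⁻¹ ^ n) ∧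
        A f₀ = (3 / Real.sqrt 2) • f₀ := by
  obtain ⟨A, hA, hnorm⟩ := spiderGraph.exists_continuousLinearMap_neighborSum_norm_le
    (by positivity) spiderPerron_pos neighborSum_spiderPerron
  let f₀ : lp (fun _ : SpiderV => ℝ) 2 := ⟨spiderPerron, memℓp_spiderPerron⟩
  have hf₀ : f₀ ≠ 0 := fun h =>
    (spiderPerron_pos (Sum.inl ())).ne' (congrArg (fun f : lp _ 2 => f (Sum.inl ())) h)
  have hAf₀ : A f₀ = (3 / Real.sqrt 2) • f₀ :=
    lp.ext <| funext fun v => (hA f₀ v).trans (neighborSum_spiderPerron v)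
  refine ⟨A, fun f v => (hA f v).trans (spiderGraph.hasSum_ite_adj v _).tsum_eq.symm,
    spiderGraph.isSymmetric_of_apply_eq_neighborSum A hA, ?_, f₀, hf₀, rfl, fun _ _ => rfl,
    hAf₀⟩
  refine le_antisymm hnorm ?_
  simpa [abs_of_nonneg (Real.sqrt_nonneg 2)] using A.norm_le_opNorm_of_apply_eq_smul hf₀ hAf₀
end

section
/- Let W be a real inner product space, T : W → W a surjective linear isometry, and ζ ∈ W. On V = ℝ × W × ℝ define the symmetric bilinear form B((a,y,z),(a',y',z')) = a z' + a' z − ⟨y, y'⟩, and define f : V → V by f(a,y,z) = (a + ⟨T y, ζ⟩ + (‖ζ‖²/2) z, T y + z ζ, z). Then: (i) B(f(x), f(x')) = B(x, x') for all x, x' ∈ V; (ii) for every x = (a,y,z) with B(x,x) = 1, one has B(f(x), x) = 1 + (1/2)‖z ζ + T y − y‖²; (iii) if moreover ‖T q + ζ − q‖ ≥ 1 for every q ∈ W, and x = (a,y,z) satisfies B(x,x) = 1, z > 0, and B(f(x), x) < cosh ε for some ε > 0, then z < 2 sinh(ε/2). -/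
/-!
`f` is the parabolic isometry fixing the isotropic vector `(1, 0, 0)`. For every `x = (a, y, z)`
one has `B(f x, x) = B(x, x) + ½ ‖z ζ + T y - y‖²`, and `z ζ + T y - y = z (T q + ζ - q)` with
`q = y / z`, so a displacement of at least `1` for the affine map `q ↦ T q + ζ` gives
`B(f x, x) ≥ 1 + z² / 2`. Comparing with `cosh ε = 1 + 2 sinh² (ε / 2)` bounds `z`.
-/

open Real

section Lorentz

variable {W : Type*} [NormedAddCommGroup W] [InnerProductSpace ℝ W]

def lorentzForm (x x' : ℝ × W × ℝ) : ℝ :=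
  x.1 * x'.2.2 + x'.1 * x.2.2 - inner ℝ x.2.1 x'.2.1

noncomputable def parabolicMap (T : W →ₗᵢ[ℝ] W) (ζ : W) (x : ℝ × W × ℝ) : ℝ × W × ℝ :=
  (x.1 + inner ℝ (T x.2.1) ζ + (‖ζ‖ ^ 2 / 2) * x.2.2, T x.2.1 + x.2.2 • ζ, x.2.2)

theorem lorentzForm_parabolicMap (T : W →ₗᵢ[ℝ] W) (ζ : W) (x x' : ℝ × W × ℝ) :
    lorentzForm (parabolicMap T ζ x) (parabolicMap T ζ x') = lorentzForm x x' := by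
  simp only [lorentzForm, parabolicMap, inner_add_left, inner_add_right, real_inner_smul_left,
    real_inner_smul_right, LinearIsometry.inner_map_map, real_inner_self_eq_norm_sq,
    real_inner_comm ζ (T x'.2.1)]
  ring

theorem lorentzForm_parabolicMap_self (T : W →ₗᵢ[ℝ] W) (ζ : W) (x : ℝ × W × ℝ) :
    lorentzForm (parabolicMap T ζ x) x =
      lorentzForm x x + (1 / 2) * ‖x.2.2 • ζ + T x.2.1 - x.2.1‖ ^ 2 := by
  obtain ⟨a, y, z⟩ := x
  rw [← real_inner_self_eq_norm_sq]
  simp only [lorentzForm, parabolicMap, inner_add_left, inner_add_right, inner_sub_left,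
    inner_sub_right, real_inner_smul_left, real_inner_smul_right, LinearIsometry.inner_map_map,
    real_inner_self_eq_norm_sq, real_inner_comm ζ (T y), real_inner_comm y ζ,
    real_inner_comm y (T y), norm_smul, norm_eq_abs, mul_pow, sq_abs]
  ring

end Lorentz

theorem mul_le_norm_smul_add_map_sub {W : Type*} [NormedAddCommGroup W] [NormedSpace ℝ W]
    (T : W →ₗ[ℝ] W) {ζ : W} {d : ℝ} (hdisp : ∀ q : W, d ≤ ‖T q + ζ - q‖) {z : ℝ} (hz : 0 < z)
    (y : W) : z * d ≤ ‖z • ζ + T y - y‖ := by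
  have hscale : z • (T (z⁻¹ • y) + ζ - z⁻¹ • y) = z • ζ + T y - y := by
    simp only [smul_add, smul_sub, map_smul, smul_smul, mul_inv_cancel₀ hz.ne', one_smul]
    abel
  rw [← hscale, norm_smul, norm_of_nonneg hz.le]
  exact mul_le_mul_of_nonneg_left (hdisp _) hz.le

theorem Real.cosh_eq_one_add_two_mul_sinh_half_sq (ε : ℝ) :
    cosh ε = 1 + 2 * sinh (ε / 2) ^ 2 := by
  conv_lhs => rw [← mul_div_cancel₀ ε two_ne_zero, cosh_two_mul, cosh_sq]
  ring

theorem Real.lt_two_mul_sinh_half_of_one_add_half_sq_lt_cosh {z ε : ℝ} (hε : 0 ≤ ε)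
    (h : 1 + (1 / 2) * z ^ 2 < cosh ε) : z < 2 * sinh (ε / 2) := by
  rw [cosh_eq_one_add_two_mul_sinh_half_sq] at h
  have hsinh : 0 ≤ sinh (ε / 2) := sinh_nonneg_iff.mpr (by linarith)
  exact (abs_lt_of_sq_lt_sq' (by linarith) (by positivity)).2

theorem parabolic_horoball_computation_general {W : Type*} [NormedAddCommGroup W]
    [InnerProductSpace ℝ W] (T : W →ₗ[ℝ] W)
    (hTiso : ∀ y : W, ‖T y‖ = ‖y‖) (ζ : W)
    (B : (ℝ × W × ℝ) → (ℝ × W × ℝ) → ℝ)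
    (hB : ∀ x x' : ℝ × W × ℝ,
      B x x' = x.1 * x'.2.2 + x'.1 * x.2.2 - (inner ℝ x.2.1 x'.2.1 : ℝ))
    (f : (ℝ × W × ℝ) → (ℝ × W × ℝ))
    (hf : ∀ x : ℝ × W × ℝ,
      f x = (x.1 + (inner ℝ (T x.2.1) ζ : ℝ) + (‖ζ‖ ^ 2 / 2) * x.2.2,
             T x.2.1 + x.2.2 • ζ, x.2.2)) :
    (∀ x x' : ℝ × W × ℝ, B (f x) (f x') = B x x') ∧
    (∀ x : ℝ × W × ℝ, B x x = 1 →
      B (f x) x = 1 + (1 / 2) * ‖x.2.2 • ζ + T x.2.1 - x.2.1‖ ^ 2) ∧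
    ((∀ q : W, 1 ≤ ‖T q + ζ - q‖) →
      ∀ x : ℝ × W × ℝ, B x x = 1 → 0 < x.2.2 →
        ∀ ε : ℝ, 0 < ε → B (f x) x < Real.cosh ε → x.2.2 < 2 * Real.sinh (ε / 2)) := by
  obtain rfl : B = lorentzForm := funext₂ hB
  obtain rfl : f = parabolicMap ⟨T, hTiso⟩ ζ := funext hf
  have hself (x : ℝ × W × ℝ) (hx : lorentzForm x x = 1) :
      lorentzForm (parabolicMap ⟨T, hTiso⟩ ζ x) x =
        1 + (1 / 2) * ‖x.2.2 • ζ + T x.2.1 - x.2.1‖ ^ 2 := by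
    rw [lorentzForm_parabolicMap_self, hx]
    rfl
  refine ⟨lorentzForm_parabolicMap _ ζ, hself, fun hdisp x hx hz ε hε hlt => ?_⟩
  have hdispx := mul_le_norm_smul_add_map_sub T hdisp hz x.2.1
  rw [mul_one] at hdispx
  refine lt_two_mul_sinh_half_of_one_add_half_sq_lt_cosh hε.le (lt_of_le_of_lt ?_ hlt)
  rw [hself x hx]
  gcongr

/-- The horoball computation for parabolic isometries.  Let `W` be a real inner
product space, `T : W → W` a surjective linear isometry and `ζ ∈ W`.  On
`V = ℝ × W × ℝ` with the Lorentzian form `B((a,y,z),(a',y',z')) = a z' + a' z - ⟪y,y'⟫`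
and the map `f(a,y,z) = (a + ⟪T y, ζ⟫ + (‖ζ‖²/2) z, T y + z ζ, z)`:
(i) `f` preserves `B`; (ii) if `B(x,x) = 1` then
`B(f x, x) = 1 + ½ ‖z ζ + T y - y‖²`; (iii) if in addition the affine map
`q ↦ T q + ζ` displaces every point by at least `1`, `B(x,x) = 1`, `z > 0`
and `B(f x, x) < cosh ε` with `ε > 0`, then `z < 2 sinh (ε/2)`. -/
theorem parabolic_horoball_computation {W : Type*} [NormedAddCommGroup W]
    [InnerProductSpace ℝ W] (T : W →ₗ[ℝ] W) (hTsurj : Function.Surjective T)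
    (hTiso : ∀ y : W, ‖T y‖ = ‖y‖) (ζ : W)
    (B : (ℝ × W × ℝ) → (ℝ × W × ℝ) → ℝ)
    (hB : ∀ x x' : ℝ × W × ℝ,
      B x x' = x.1 * x'.2.2 + x'.1 * x.2.2 - (inner ℝ x.2.1 x'.2.1 : ℝ))
    (f : (ℝ × W × ℝ) → (ℝ × W × ℝ))
    (hf : ∀ x : ℝ × W × ℝ,
      f x = (x.1 + (inner ℝ (T x.2.1) ζ : ℝ) + (‖ζ‖ ^ 2 / 2) * x.2.2,
             T x.2.1 + x.2.2 • ζ, x.2.2)) :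
    (∀ x x' : ℝ × W × ℝ, B (f x) (f x') = B x x') ∧
    (∀ x : ℝ × W × ℝ, B x x = 1 →
      B (f x) x = 1 + (1 / 2) * ‖x.2.2 • ζ + T x.2.1 - x.2.1‖ ^ 2) ∧
    ((∀ q : W, 1 ≤ ‖T q + ζ - q‖) →
      ∀ x : ℝ × W × ℝ, B x x = 1 → 0 < x.2.2 →
        ∀ ε : ℝ, 0 < ε → B (f x) x < Real.cosh ε → x.2.2 < 2 * Real.sinh (ε / 2)) :=
  parabolic_horoball_computation_general T hTiso ζ B hB f hf
end

section
/- Let V be a real vector space with a symmetric bilinear form B, and let x, v, w ∈ V satisfy B(x,x) = 1, B(v,v) = B(w,w) = 0, B(v,w) ≥ 1, B(x,v) > 0 and B(x,w) > 0. Assume there is no 2-dimensional subspace of the span of {x, v, w} on which B is positive definite. Then B(x,v) + B(x,w) ≥ √2. -/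
/-!
If `B x x > 0` and `B x y ^ 2 < B x x * B y y`, then `B` is positive definite on the plane
spanned by `x` and `y` (its Gram determinant and its first diagonal entry are positive). So when
`B` has no positive definite plane, the reverse Cauchy–Schwarz inequality
`B x x * B y y ≤ B x y ^ 2` holds. Applied to `y = v + w`, for which `B y y = 2 B(v,w) ≥ 2`, it gives
`(B(x,v) + B(x,w)) ^ 2 ≥ 2`.
-/

open Submodule Module

namespace LinearMap

variable {V : Type*} [AddCommGroup V] [Module ℝ V] {B : V →ₗ[ℝ] V →ₗ[ℝ] ℝ}

lemma apply_smul_add_smul_self (hB : ∀ a b, B a b = B b a) (x y : V) (s t : ℝ) :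
    B (s • x + t • y) (s • x + t • y) = s ^ 2 * B x x + 2 * s * t * B x y + t ^ 2 * B y y := by
  simp only [map_add, map_smul, add_apply, smul_apply, smul_eq_mul, hB y x]
  ring

section GramPositive

variable (hB : ∀ a b, B a b = B b a) {x y : V} (hx : 0 < B x x)
  (hgram : B x y ^ 2 < B x x * B y y)
include hB hx hgram

lemma apply_smul_add_smul_self_pos {s t : ℝ} (hst : s ≠ 0 ∨ t ≠ 0) :
    0 < B (s • x + t • y) (s • x + t • y) := by
  rw [apply_smul_add_smul_self hB]
  have hcompl : B x x * (s ^ 2 * B x x + 2 * s * t * B x y + t ^ 2 * B y y)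
      = (s * B x x + t * B x y) ^ 2 + t ^ 2 * (B x x * B y y - B x y ^ 2) := by ring
  refine pos_of_mul_pos_right ?_ hx.le
  rw [hcompl]
  rcases eq_or_ne t 0 with rfl | ht
  · have hs : s ≠ 0 := hst.resolve_right (not_not.2 rfl)
    simp only [zero_mul, add_zero, ne_eq, OfNat.ofNat_ne_zero, not_false_eq_true,
      zero_pow]
    positivity
  · have := sub_pos.2 hgram
    positivity

lemma linearIndependent_pair_of_sq_lt_mul : LinearIndependent ℝ ![x, y] := by
  refine LinearIndependent.pair_iff.2 fun s t hst => ?_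
  by_contra hne
  have := apply_smul_add_smul_self_pos hB hx hgram (s := s) (t := t) (by tauto)
  simp [hst] at this

lemma finrank_span_pair_of_sq_lt_mul : finrank ℝ (span ℝ {x, y}) = 2 := by
  have h := finrank_span_eq_card (linearIndependent_pair_of_sq_lt_mul hB hx hgram)
  rwa [Matrix.range_cons, Matrix.range_cons, Matrix.range_empty, Set.union_empty,
    Set.singleton_union, Fintype.card_fin] at h

lemma apply_self_pos_of_mem_span_pair {u : V} (hu : u ∈ span ℝ {x, y}) (hu0 : u ≠ 0) :
    0 < B u u := by
  obtain ⟨s, t, rfl⟩ := mem_span_pair.1 hu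
  refine apply_smul_add_smul_self_pos hB hx hgram ?_
  by_contra! h
  simp [h.1, h.2] at hu0

end GramPositive

theorem mul_le_sq_of_not_exists_posDef_plane (hB : ∀ a b, B a b = B b a) {W : Submodule ℝ V}
    {x y : V} (hxW : x ∈ W) (hyW : y ∈ W) (hx : 0 < B x x)
    (hW : ¬ ∃ S : Submodule ℝ V, S ≤ W ∧ finrank ℝ S = 2 ∧ ∀ u ∈ S, u ≠ 0 → 0 < B u u) :
    B x x * B y y ≤ B x y ^ 2 := by
  by_contra! hgram
  exact hW ⟨span ℝ {x, y}, span_le.2 (Set.pair_subset hxW hyW),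
    finrank_span_pair_of_sq_lt_mul hB hx hgram,
    fun _ => apply_self_pos_of_mem_span_pair hB hx hgram⟩

end LinearMap

/-- The Lorentzian reverse Cauchy–Schwarz estimate used in the uniqueness part
of the horoball theorem.  Let `B` be a symmetric bilinear form on a real vector
space `V` and let `x, v, w ∈ V` with `B(x,x) = 1`, `B(v,v) = B(w,w) = 0`,
`B(v,w) ≥ 1`, `B(x,v) > 0`, `B(x,w) > 0`.  If no `2`-dimensional subspace of
`span {x, v, w}` is positive definite for `B`, then `B(x,v) + B(x,w) ≥ √2`. -/
theorem lorentzian_horoball_uniqueness {V : Type*} [AddCommGroup V] [Module ℝ V]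
    (B : V →ₗ[ℝ] V →ₗ[ℝ] ℝ) (hsymm : ∀ a b : V, B a b = B b a)
    (x v w : V) (hx : B x x = 1) (hv : B v v = 0) (hw : B w w = 0)
    (hvw : 1 ≤ B v w) (hxv : 0 < B x v) (hxw : 0 < B x w)
    (hsig : ¬ ∃ S : Submodule ℝ V, S ≤ Submodule.span ℝ {x, v, w} ∧
      Module.finrank ℝ S = 2 ∧ ∀ y ∈ S, y ≠ 0 → 0 < B y y) :
    Real.sqrt 2 ≤ B x v + B x w := by
  have hvwW : v + w ∈ span ℝ {x, v, w} :=
    add_mem (subset_span (by simp)) (subset_span (by simp))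
  have hcs := LinearMap.mul_le_sq_of_not_exists_posDef_plane hsymm
    (subset_span (by simp)) hvwW (hx ▸ one_pos) hsig
  have hxy : B x (v + w) = B x v + B x w := map_add _ _ _
  have hyy : B (v + w) (v + w) = 2 * B v w := by
    simp only [map_add, LinearMap.add_apply, hv, hw, hsymm w v]
    ring
  rw [hx, hxy, hyy, one_mul] at hcs
  exact Real.sqrt_le_iff.2 ⟨by positivity, by linarith⟩
end
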